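/- arXiv:1811.10424 — 10 statements merged into one kernel-verified Lean document; each statement's English description precedes it below -/
import Mathlib

section
/- Let α > 0, let r ∈ ℕ, and let (c_n)_{n≥0} be a sequence of complex numbers such that M := Σ_{n=0}^∞ (n!)^{1/α} · 2^{r·n} · |c_n| < ∞. Then the power series Σ_{n=0}^∞ c_n z^n converges absolutely for every z ∈ ℂ, and for all z ∈ ℂ one has |Σ_{n=0}^∞ c_n z^n| ≤ M · exp( |z|^α / (α · 2^{r·α}) ). -/
/-!
Raising `t ^ n ≤ n! · eᵗ` (one term of the exponential series) with `t = (|z| / 2ʳ)^α` to the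
power `1/α` gives `|z|ⁿ ≤ (n!)^{1/α} · 2^{rn} · exp (|z|^α / (α 2^{rα}))`. Multiplying by `|cₙ|`
and summing over `n` bounds both `∑ |cₙ zⁿ|` and `|∑ cₙ zⁿ|` by `M` times that exponential.
-/

open Real
open scoped Nat

lemma pow_le_factorial_rpow_mul_exp {α y : ℝ} (hα : 0 < α) (hy : 0 ≤ y) (n : ℕ) :
    y ^ n ≤ (n ! : ℝ) ^ (1 / α) * exp (y ^ α / α) := by
  have hpow : (y ^ α) ^ n ≤ n ! * exp (y ^ α) := by
    have := pow_div_factorial_le_exp _ (rpow_nonneg hy α) n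
    rwa [div_le_iff₀' (by positivity)] at this
  calc y ^ n = ((y ^ α) ^ n) ^ (1 / α) := by
        rw [← rpow_natCast (y ^ α), ← rpow_mul hy, ← rpow_mul hy, mul_comm α, mul_assoc,
          mul_one_div_cancel hα.ne', mul_one, rpow_natCast]
    _ ≤ (n ! * exp (y ^ α)) ^ (1 / α) := by gcongr
    _ = (n ! : ℝ) ^ (1 / α) * exp (y ^ α / α) := by
        rw [mul_rpow (by positivity) (exp_nonneg _), ← exp_mul, mul_one_div]

lemma pow_le_factorial_rpow_mul_pow_mul_exp {α x s : ℝ} (hα : 0 < α) (hx : 0 ≤ x) (hs : 0 < s)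
    (n : ℕ) : x ^ n ≤ (n ! : ℝ) ^ (1 / α) * s ^ n * exp (x ^ α / (α * s ^ α)) := by
  have h := pow_le_factorial_rpow_mul_exp hα (div_nonneg hx hs.le) n
  rw [div_pow, div_le_iff₀ (by positivity), div_rpow hx hs.le, div_div, mul_comm (s ^ α)] at h
  linarith

/-- One-dimensional case of Lemma A.1: an ℓ¹-type bound on weighted Taylor
coefficients yields a growth bound of exponential order `α`. -/
theorem weighted_coeff_bound_implies_growth
    (α : ℝ) (hα : 0 < α) (r : ℕ) (c : ℕ → ℂ)
    (hsum : Summable fun n : ℕ =>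
      (n.factorial : ℝ) ^ (1 / α) * 2 ^ (r * n) * ‖c n‖) :
    ∀ z : ℂ, Summable (fun n : ℕ => ‖c n * z ^ n‖) ∧
      ‖∑' n : ℕ, c n * z ^ n‖ ≤
        (∑' n : ℕ, (n.factorial : ℝ) ^ (1 / α) * 2 ^ (r * n) * ‖c n‖) *
          Real.exp (‖z‖ ^ α / (α * (2 : ℝ) ^ ((r : ℝ) * α))) := by
  intro z
  set E := Real.exp (‖z‖ ^ α / (α * (2 : ℝ) ^ ((r : ℝ) * α)))
  have hbound (n : ℕ) :
      ‖c n * z ^ n‖ ≤ (n.factorial : ℝ) ^ (1 / α) * 2 ^ (r * n) * ‖c n‖ * E := by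
    have hz := pow_le_factorial_rpow_mul_pow_mul_exp hα (norm_nonneg z)
      (pow_pos two_pos r) n
    rw [← pow_mul, ← rpow_natCast_mul zero_le_two] at hz
    rw [norm_mul, norm_pow]
    calc ‖c n‖ * ‖z‖ ^ n ≤ ‖c n‖ * ((n ! : ℝ) ^ (1 / α) * 2 ^ (r * n) * E) := by gcongr
      _ = _ := by ring
  exact ⟨(hsum.mul_right E).of_nonneg_of_le (fun _ ↦ norm_nonneg _) hbound,
    tsum_of_norm_bounded (hsum.hasSum.mul_right E) hbound⟩
end

section
/- Let α > 0, ε > 0, M ≥ 0, and let f : ℂ → ℂ be an entire function satisfying |f(z)| ≤ M · exp(ε·|z|^α) for all z ∈ ℂ. Write f(z) = Σ_{n=0}^∞ c_n z^n for its Taylor expansion at 0. Then for every n ∈ ℕ one has |c_n| ≤ M · (α·ε·e)^{n/α} · (n!)^{-1/α}. -/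
/-!
Cauchy's estimate on the circle of radius `R` gives `‖c n‖ ≤ M exp (ε R ^ α) / R ^ n`. The
choice `R ^ α = n / (α ε)` minimises the right-hand side, turning it into
`M (α ε e) ^ (n / α) n ^ (-n / α)`, and `n! ≤ n ^ n` finishes.
-/

open Metric

theorem hasFPowerSeriesOnBall_ofScalars_of_forall_hasSum {𝕜 : Type*} [RCLike 𝕜]
    {f : 𝕜 → 𝕜} {c : ℕ → 𝕜} (hc : ∀ z, HasSum (fun n => c n * z ^ n) (f z)) :
    HasFPowerSeriesOnBall f (FormalMultilinearSeries.ofScalars 𝕜 c) 0 ⊤ where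
  r_le := by
    refine (FormalMultilinearSeries.radius_eq_top_of_summable_norm _ fun r => ?_).ge
    simpa [FormalMultilinearSeries.ofScalars_norm] using (hc ((r : ℝ) : 𝕜)).summable.norm
  r_pos := ENNReal.zero_lt_top
  hasSum {y} _ := by
    simpa [FormalMultilinearSeries.ofScalars_apply_eq, mul_comm] using hc y

theorem coeff_eq_iteratedDeriv_div_factorial_of_forall_hasSum {𝕜 : Type*} [RCLike 𝕜]
    {f : 𝕜 → 𝕜} {c : ℕ → 𝕜} (hc : ∀ z, HasSum (fun n => c n * z ^ n) (f z)) (n : ℕ) :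
    c n = iteratedDeriv n f 0 / n.factorial := by
  have hf := (hasFPowerSeriesOnBall_ofScalars_of_forall_hasSum hc).hasFPowerSeriesAt
  simpa using congrArg (·.coeff n) (hf.eq_formalMultilinearSeries hf.analyticAt.hasFPowerSeriesAt)

theorem Complex.norm_coeff_le_of_forall_mem_sphere_norm_le {f : ℂ → ℂ} {c : ℕ → ℂ}
    (hc : ∀ z, HasSum (fun n => c n * z ^ n) (f z)) {R C : ℝ} (hR : 0 < R)
    (hC : ∀ z ∈ sphere (0 : ℂ) R, ‖f z‖ ≤ C) (n : ℕ) :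
    ‖c n‖ ≤ C / R ^ n := by
  have hf : Differentiable ℂ f := fun z =>
    ((hasFPowerSeriesOnBall_ofScalars_of_forall_hasSum hc).analyticAt_of_mem
      (by simp)).differentiableAt
  have hn : (0 : ℝ) < n.factorial := by positivity
  rw [coeff_eq_iteratedDeriv_div_factorial_of_forall_hasSum hc, norm_div, Complex.norm_natCast,
    div_le_iff₀ hn, div_mul_eq_mul_div, mul_comm C]
  exact norm_iteratedDeriv_le_of_forall_mem_sphere_norm_le n hR hf.diffContOnCl hC

theorem rpow_neg_mul_le_factorial_rpow_neg (n : ℕ) {s : ℝ} (hs : 0 ≤ s) :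
    (n : ℝ) ^ (-(n * s)) ≤ (n.factorial : ℝ) ^ (-s) := by
  rw [neg_mul_eq_mul_neg, Real.rpow_mul n.cast_nonneg, Real.rpow_natCast]
  exact Real.rpow_le_rpow_of_nonpos (by positivity) (mod_cast n.factorial_le_pow) (by linarith)

theorem exp_mul_rpow_div_pow_eq {α ε : ℝ} (hα : 0 < α) (hε : 0 < ε) {n : ℕ} (hn : 0 < n) :
    Real.exp (ε * (((n : ℝ) / (α * ε)) ^ α⁻¹) ^ α) / (((n : ℝ) / (α * ε)) ^ α⁻¹) ^ n =
      (α * ε * Real.exp 1) ^ ((n : ℝ) / α) * (n : ℝ) ^ (-((n : ℝ) / α)) := by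
  have hαε : 0 < α * ε := mul_pos hα hε
  have hn' : (0 : ℝ) < n := Nat.cast_pos.mpr hn
  rw [Real.rpow_inv_rpow (div_pos hn' hαε).le hα.ne', ← Real.rpow_natCast,
    ← Real.rpow_mul (div_pos hn' hαε).le, Real.div_rpow hn'.le hαε.le,
    Real.mul_rpow hαε.le (Real.exp_pos 1).le, Real.exp_one_rpow, Real.rpow_neg hn'.le]
  field_simp

/-- One-dimensional coefficient estimate from the proof of Lemma A.2:
a growth bound of exponential order `α` and type `ε` gives a factorial decay
estimate on the Taylor coefficients. -/
theorem growth_implies_coeff_bound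
    (α ε M : ℝ) (hα : 0 < α) (hε : 0 < ε) (hM : 0 ≤ M)
    (f : ℂ → ℂ) (c : ℕ → ℂ)
    (hc : ∀ z : ℂ, HasSum (fun n : ℕ => c n * z ^ n) (f z))
    (hbound : ∀ z : ℂ, ‖f z‖ ≤ M * Real.exp (ε * ‖z‖ ^ α)) :
    ∀ n : ℕ, ‖c n‖ ≤
      M * (α * ε * Real.exp 1) ^ ((n : ℝ) / α) * (n.factorial : ℝ) ^ (-(1 / α)) := by
  intro n
  rcases n.eq_zero_or_pos with rfl | hn
  · simpa [coeff_eq_iteratedDeriv_div_factorial_of_forall_hasSum hc 0, Real.zero_rpow hα.ne']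
      using hbound 0
  set R := ((n : ℝ) / (α * ε)) ^ α⁻¹
  have hR : 0 < R := by positivity
  calc ‖c n‖ ≤ M * Real.exp (ε * R ^ α) / R ^ n :=
        Complex.norm_coeff_le_of_forall_mem_sphere_norm_le hc hR
          (fun z hz => by simpa [mem_sphere_zero_iff_norm.mp hz] using hbound z) n
    _ = M * ((α * ε * Real.exp 1) ^ ((n : ℝ) / α) * (n : ℝ) ^ (-((n : ℝ) / α))) := by
        rw [mul_div_assoc, exp_mul_rpow_div_pow_eq hα hε hn]
    _ ≤ M * ((α * ε * Real.exp 1) ^ ((n : ℝ) / α) * (n.factorial : ℝ) ^ (-(1 / α))) := by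
        gcongr
        simpa [div_eq_mul_inv] using rpow_neg_mul_le_factorial_rpow_neg n (s := α⁻¹) (by positivity)
    _ = _ := by ring
end

section
/- Let α > 0 and let f : ℂ → ℂ be an entire function such that for every t > 0, sup_{z∈ℂ} |f(z)|·exp(−t|z|^α) < ∞. Write f(z) = Σ_{n=0}^∞ c_n z^n for its Taylor expansion at 0. Then the Taylor series converges to f in the topology of E^α_min(ℂ); that is, for every t > 0, sup_{z∈ℂ} |f(z) − Σ_{n=0}^N c_n z^n| · exp(−t·|z|^α) → 0 as N → ∞. -/
open Filter Topology FormalMultilinearSeries Metric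

/-!
The series converges everywhere, so `f` is entire with Taylor coefficients `c n`. If
`‖f w‖ ≤ M exp (s ‖w‖ ^ α)` with `s = t / 2 ^ α`, the Cauchy estimate on the circle of radius
`2 ‖z‖` gives `‖c n‖ (2 ‖z‖) ^ n ≤ M exp (t ‖z‖ ^ α)`. Hence the terms of the series at `z` are
dominated by `M exp (t ‖z‖ ^ α) 2 ^ (-n)`, the tail after `N` is at most
`M exp (t ‖z‖ ^ α) 2 ^ (-N)`, and the weight `exp (-t ‖z‖ ^ α)` cancels the exponential:
the weighted error is at most `M 2 ^ (-N)`, uniformly in `z`.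
-/

section PowerSeries

variable {𝕜 : Type*} [NontriviallyNormedField 𝕜] {f : 𝕜 → 𝕜} {c : ℕ → 𝕜}

theorem radius_ofScalars_eq_top_of_summable (hc : ∀ z, Summable fun n => c n * z ^ n) :
    (ofScalars 𝕜 c).radius = ⊤ := by
  refine ENNReal.eq_top_of_forall_nnreal_le fun r => ?_
  obtain ⟨z, hz⟩ := NormedField.exists_lt_norm 𝕜 r
  calc (r : ENNReal) ≤ ‖z‖₊ := ENNReal.coe_le_coe.2 hz.le
    _ ≤ (ofScalars 𝕜 c).radius := (ofScalars 𝕜 c).le_radius_of_tendsto (l := 0) <| by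
      simpa [ofScalars_norm] using (hc z).tendsto_atTop_zero.norm

theorem hasFPowerSeriesOnBall_ofScalars_of_hasSum (hc : ∀ z, HasSum (fun n => c n * z ^ n) (f z)) :
    HasFPowerSeriesOnBall f (ofScalars 𝕜 c) 0 ⊤ where
  r_le := (radius_ofScalars_eq_top_of_summable fun z => (hc z).summable).ge
  r_pos := ENNReal.zero_lt_top
  hasSum {y} _ := by simpa [ofScalars_apply_eq, mul_comm] using hc y

end PowerSeries

theorem HasFPowerSeriesOnBall.differentiable_of_top {𝕜 E F : Type*} [NontriviallyNormedField 𝕜]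
    [NormedAddCommGroup E] [NormedSpace 𝕜 E] [NormedAddCommGroup F] [NormedSpace 𝕜 F]
    [CompleteSpace F] {p : FormalMultilinearSeries 𝕜 E F} {f : E → F} {x : E}
    (hf : HasFPowerSeriesOnBall f p x ⊤) : Differentiable 𝕜 f := by
  simpa [differentiableOn_univ] using hf.differentiableOn

namespace HasFPowerSeriesOnBall

variable {f : ℂ → ℂ} {c : ℕ → ℂ}

theorem scalars_eq_iteratedDeriv_div_factorial (hf : HasFPowerSeriesOnBall f (ofScalars ℂ c) 0 ⊤)
    (n : ℕ) : c n = iteratedDeriv n f 0 / n.factorial := by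
  have := hf.hasFPowerSeriesAt.eq_formalMultilinearSeries
    (hf.differentiable_of_top.analyticAt 0).hasFPowerSeriesAt
  exact congrFun (ofScalars_series_injective ℂ ℂ this) n

theorem norm_scalars_mul_pow_le (hf : HasFPowerSeriesOnBall f (ofScalars ℂ c) 0 ⊤) {R C : ℝ}
    (hR : 0 ≤ R) (hC : ∀ z ∈ sphere (0 : ℂ) R, ‖f z‖ ≤ C) (n : ℕ) : ‖c n‖ * R ^ n ≤ C := by
  rw [hf.scalars_eq_iteratedDeriv_div_factorial n, norm_div, Complex.norm_natCast]
  rcases hR.eq_or_lt with rfl | hR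
  · have h0 : ‖f 0‖ ≤ C := hC 0 (by simp)
    rcases n with _ | n
    · simpa using h0
    · simpa using (norm_nonneg _).trans h0
  · have := Complex.norm_iteratedDeriv_le_of_forall_mem_sphere_norm_le n hR
      hf.differentiable_of_top.diffContOnCl hC
    calc ‖iteratedDeriv n f 0‖ / n.factorial * R ^ n
        ≤ n.factorial * C / R ^ n / n.factorial * R ^ n := by gcongr
      _ = C := by field_simp

end HasFPowerSeriesOnBall

theorem norm_sub_sum_range_succ_le_of_norm_mul_two_mul_pow_le {𝕜 : Type*} [NormedField 𝕜]
    {c : ℕ → 𝕜} {z s : 𝕜} {K : ℝ} (hs : HasSum (fun n => c n * z ^ n) s)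
    (hK : ∀ n, ‖c n‖ * (2 * ‖z‖) ^ n ≤ K) (N : ℕ) :
    ‖s - ∑ n ∈ Finset.range (N + 1), c n * z ^ n‖ ≤ K * (1 / 2) ^ N := by
  have hterm (n : ℕ) : ‖c n * z ^ n‖ ≤ K * (1 / 2) ^ n :=
    calc ‖c n * z ^ n‖ = ‖c n‖ * (2 * ‖z‖) ^ n * (1 / 2) ^ n := by
          rw [mul_assoc, ← mul_pow, norm_mul, norm_pow]; congr 2; ring
      _ ≤ K * (1 / 2) ^ n := by gcongr; exact hK n
  calc ‖s - ∑ n ∈ Finset.range (N + 1), c n * z ^ n‖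
      ≤ K * (1 / 2) ^ (N + 1) / (1 - 1 / 2) := by
        rw [norm_sub_rev]; exact norm_sub_le_of_geometric_bound_of_hasSum (by norm_num) hterm hs _
    _ = K * (1 / 2) ^ N := by rw [pow_succ]; ring

theorem le_mul_exp_of_mul_exp_neg_le {x M a : ℝ} (h : x * Real.exp (-a) ≤ M) :
    x ≤ M * Real.exp a := by
  rwa [Real.exp_neg, ← div_eq_mul_inv, div_le_iff₀ (Real.exp_pos a)] at h

theorem taylor_series_converges_in_Emin_general
    (α : ℝ) (f : ℂ → ℂ) (c : ℕ → ℂ)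
    (hc : ∀ z : ℂ, HasSum (fun n : ℕ => c n * z ^ n) (f z))
    (hmin : ∀ t : ℝ, 0 < t → BddAbove (Set.range fun z : ℂ =>
      ‖f z‖ * Real.exp (-t * ‖z‖ ^ α))) :
    ∀ t : ℝ, 0 < t → ∀ ε : ℝ, 0 < ε → ∃ N₀ : ℕ, ∀ N : ℕ, N₀ ≤ N → ∀ z : ℂ,
      ‖f z - ∑ n ∈ Finset.range (N + 1), c n * z ^ n‖ *
        Real.exp (-t * ‖z‖ ^ α) ≤ ε := by
  intro t ht ε hε
  have hf := hasFPowerSeriesOnBall_ofScalars_of_hasSum hc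
  obtain ⟨M, hM⟩ := hmin (t / 2 ^ α) (by positivity)
  have hgrowth (z : ℂ) : ‖f z‖ ≤ M * Real.exp (t / 2 ^ α * ‖z‖ ^ α) :=
    le_mul_exp_of_mul_exp_neg_le (by simpa only [neg_mul] using hM ⟨z, rfl⟩)
  have hcoeff (z : ℂ) (n : ℕ) : ‖c n‖ * (2 * ‖z‖) ^ n ≤ M * Real.exp (t * ‖z‖ ^ α) := by
    refine hf.norm_scalars_mul_pow_le (by positivity) (fun w hw => ?_) n
    rw [mem_sphere_zero_iff_norm] at hw
    calc ‖f w‖ ≤ M * Real.exp (t / 2 ^ α * ‖w‖ ^ α) := hgrowth w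
      _ = M * Real.exp (t * ‖z‖ ^ α) := by
        rw [hw, Real.mul_rpow zero_le_two (norm_nonneg z)]; field_simp
  have hrem (N : ℕ) (z : ℂ) :
      ‖f z - ∑ n ∈ Finset.range (N + 1), c n * z ^ n‖ * Real.exp (-t * ‖z‖ ^ α) ≤
        M * (1 / 2) ^ N :=
    calc _ ≤ M * Real.exp (t * ‖z‖ ^ α) * (1 / 2) ^ N * Real.exp (-t * ‖z‖ ^ α) := by
          gcongr
          exact norm_sub_sum_range_succ_le_of_norm_mul_two_mul_pow_le (hc z) (hcoeff z) N
      _ = M * (1 / 2) ^ N := by rw [neg_mul, Real.exp_neg]; field_simp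
  have hlim : Tendsto (fun N : ℕ => M * (1 / 2 : ℝ) ^ N) atTop (𝓝 0) := by
    simpa using ((tendsto_pow_atTop_nhds_zero_of_lt_one (r := (1 / 2 : ℝ)) (by norm_num)
      (by norm_num)).const_mul M)
  obtain ⟨N₀, hN₀⟩ := eventually_atTop.1 (hlim.eventually (ge_mem_nhds hε))
  exact ⟨N₀, fun N hN z => (hrem N z).trans (hN₀ N hN)⟩

/-- One-dimensional case of Corollary 2.14: the Taylor series of a function of
order at most `α` and minimal type converges in the topology of
`E^α_min(ℂ)`. -/
theorem taylor_series_converges_in_Emin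
    (α : ℝ) (hα : 0 < α) (f : ℂ → ℂ) (c : ℕ → ℂ)
    (hc : ∀ z : ℂ, HasSum (fun n : ℕ => c n * z ^ n) (f z))
    (hmin : ∀ t : ℝ, 0 < t → BddAbove (Set.range fun z : ℂ =>
      ‖f z‖ * Real.exp (-t * ‖z‖ ^ α))) :
    ∀ t : ℝ, 0 < t → ∀ ε : ℝ, 0 < ε → ∃ N₀ : ℕ, ∀ N : ℕ, N₀ ≤ N → ∀ z : ℂ,
      ‖f z - ∑ n ∈ Finset.range (N + 1), c n * z ^ n‖ *
        Real.exp (-t * ‖z‖ ^ α) ≤ ε :=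
  taylor_series_converges_in_Emin_general α f c hc hmin
end

section
/- Let α ∈ (0,1], let C > 0, and let (a_k)_{k≥1} be complex numbers with |a_k| ≤ C^k for all k ≥ 1. Let (φ_n)_{n≥0} be a finitely supported sequence of complex numbers, and define ψ_0 := φ_0 and, for m ≥ 1, ψ_m := (1/m!) · Σ_{(k_1,…,k_m) ∈ (ℕ_{≥1})^m} (k_1+⋯+k_m)! · a_{k_1}⋯a_{k_m} · φ_{k_1+⋯+k_m} (a finite sum, since φ is finitely supported). Then for any l, l' ∈ ℕ with 2^{l'} > C·(1 + 2^l), one has Σ_{m=0}^∞ (m!)^{1/α} · 2^{l·m} · |ψ_m| ≤ (1 − 2^l·C/(2^{l'} − C))^{−1} · Σ_{n=0}^∞ (n!)^{1/α} · 2^{l'·n} · |φ_n|. -/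
/-!
Put `r = C / 2 ^ l'` and `n = k₁ + ⋯ + kₘ ≥ m`. Since `1 / α ≥ 1`,
`(m!) ^ (1/α - 1) * n! ≤ (n!) ^ (1/α)`, and `|a_{k₁} ⋯ a_{kₘ}| ≤ C ^ n = r ^ n * 2 ^ (l' n)`.
Bounding each weighted coefficient of `φ` by its whole `l'`-norm `‖φ‖` gives
`(m!) ^ (1/α) * 2 ^ (l m) * |ψₘ| ≤ 2 ^ (l m) * (∑_{k ≥ 1} r ^ k) ^ m * ‖φ‖ = q ^ m * ‖φ‖`
with `q = 2 ^ l * C / (2 ^ l' - C) < 1`, and the geometric series in `m` sums to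
`(1 - q)⁻¹ * ‖φ‖`.
-/

open Finset Fintype

lemma rpow_mul_inv_mul_le_rpow {x y p : ℝ} (hx : 0 < x) (hxy : x ≤ y) (hp : 1 ≤ p) :
    x ^ p * x⁻¹ * y ≤ y ^ p := by
  have hy : 0 < y := hx.trans_le hxy
  calc x ^ p * x⁻¹ * y = x ^ (p - 1) * y := by rw [Real.rpow_sub_one hx.ne', div_eq_mul_inv]
    _ ≤ y ^ (p - 1) * y := by gcongr
    _ = y ^ p := by rw [Real.rpow_sub_one hy.ne', div_mul_cancel₀ _ hy.ne']

lemma sum_pnat_pow_le {r : ℝ} (hr0 : 0 ≤ r) (hr1 : r < 1) (S : Finset ℕ+) :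
    ∑ j ∈ S, r ^ (j : ℕ) ≤ r / (1 - r) := by
  have hsum : HasSum (fun j : ℕ+ => r ^ (j : ℕ)) (r / (1 - r)) := by
    rw [hasSum_pnat_iff_hasSum_succ, div_eq_mul_inv]
    simpa only [pow_succ'] using (hasSum_geometric_of_lt_one hr0 hr1).mul_left r
  exact sum_le_hasSum S (fun _ _ => by positivity) hsum

lemma sum_piFinset_pow_sum_le {r : ℝ} (hr0 : 0 ≤ r) (hr1 : r < 1) (S : Finset ℕ+) (m : ℕ) :
    ∑ k ∈ piFinset fun _ : Fin m => S, r ^ (∑ i, (k i : ℕ)) ≤ (r / (1 - r)) ^ m := by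
  simp_rw [← prod_pow_eq_pow_sum]
  rw [← sum_pow' S (fun j : ℕ+ => r ^ (j : ℕ)) m]
  exact pow_le_pow_left₀ (by positivity) (sum_pnat_pow_le hr0 hr1 S) m

lemma le_sum_pnat {m : ℕ} (k : Fin m → ℕ+) : m ≤ ∑ i, (k i : ℕ) := by
  calc m = ∑ _i : Fin m, 1 := by simp
    _ ≤ ∑ i, (k i : ℕ) := sum_le_sum fun i _ => (k i).pos

lemma mem_piFinset_Iic_of_sum_lt {m N : ℕ} {k : Fin m → ℕ+} (hk : ∑ i, (k i : ℕ) < N) :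
    k ∈ piFinset fun _ => Iic N.succPNat := by
  refine mem_piFinset.2 fun i => mem_Iic.2 ?_
  have : (k i : ℕ) ≤ ∑ j, (k j : ℕ) :=
    single_le_sum (f := fun j => (k j : ℕ)) (fun _ _ => Nat.zero_le _) (mem_univ i)
  rw [← PNat.coe_le_coe, Nat.succPNat_coe]
  omega

noncomputable def weightedNorm (α : ℝ) (l : ℕ) (c : ℕ → ℂ) : ℝ :=
  ∑' n, (n.factorial : ℝ) ^ (1 / α) * 2 ^ (l * n) * ‖c n‖

lemma le_weightedNorm {α : ℝ} {l N : ℕ} {c : ℕ → ℂ} (hc : ∀ n, N ≤ n → c n = 0) (n : ℕ) :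
    (n.factorial : ℝ) ^ (1 / α) * 2 ^ (l * n) * ‖c n‖ ≤ weightedNorm α l c := by
  refine Summable.le_tsum (f := fun n => (n.factorial : ℝ) ^ (1 / α) * 2 ^ (l * n) * ‖c n‖)
    (summable_of_ne_finset_zero (s := range N) fun n hn => ?_) n fun _ _ => by positivity
  rw [hc n (by simpa using hn), norm_zero, mul_zero]

noncomputable def umbralCoeff (a : ℕ+ → ℂ) (φ : ℕ → ℂ) (m : ℕ) : ℂ :=
  (m.factorial : ℂ)⁻¹ * ∑' k : Fin m → ℕ+, ((∑ i, (k i : ℕ)).factorial : ℂ) *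
    (∏ i, a (k i)) * φ (∑ i, (k i : ℕ))

lemma umbralCoeff_zero (a : ℕ+ → ℂ) (φ : ℕ → ℂ) : umbralCoeff a φ 0 = φ 0 := by
  simp [umbralCoeff]

section

variable {α C : ℝ} {a : ℕ+ → ℂ} {φ : ℕ → ℂ} {N : ℕ}

lemma norm_umbralCoeff_le (ha : ∀ k : ℕ+, ‖a k‖ ≤ C ^ (k : ℕ)) (hφ : ∀ n, N ≤ n → φ n = 0)
    (m : ℕ) :
    ‖umbralCoeff a φ m‖ ≤ (m.factorial : ℝ)⁻¹ * ∑ k ∈ piFinset fun _ : Fin m => Iic N.succPNat,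
      ((∑ i, (k i : ℕ)).factorial : ℝ) * C ^ (∑ i, (k i : ℕ)) * ‖φ (∑ i, (k i : ℕ))‖ := by
  rw [umbralCoeff, norm_mul, norm_inv, Complex.norm_natCast, tsum_eq_sum fun k hk => by
    rw [hφ _ (not_lt.1 fun h => hk (mem_piFinset_Iic_of_sum_lt h)), mul_zero]]
  gcongr
  refine (norm_sum_le _ _).trans (sum_le_sum fun k _ => ?_)
  rw [norm_mul, norm_mul, Complex.norm_natCast, norm_prod, ← prod_pow_eq_pow_sum]
  gcongr with i
  exact ha (k i)

lemma factorial_rpow_mul_inv_mul_term_le (hα : 0 < α) (hα1 : α ≤ 1) (hC : 0 ≤ C)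
    (hφ : ∀ n, N ≤ n → φ n = 0) (l' : ℕ) {m n : ℕ} (hmn : m ≤ n) :
    (m.factorial : ℝ) ^ (1 / α) * (m.factorial : ℝ)⁻¹ * ((n.factorial : ℝ) * C ^ n * ‖φ n‖) ≤
      (C / 2 ^ l') ^ n * weightedNorm α l' φ := by
  have hp : 1 ≤ 1 / α := by rwa [le_div_iff₀ hα, one_mul]
  calc (m.factorial : ℝ) ^ (1 / α) * (m.factorial : ℝ)⁻¹ * ((n.factorial : ℝ) * C ^ n * ‖φ n‖)
      = (m.factorial : ℝ) ^ (1 / α) * (m.factorial : ℝ)⁻¹ * n.factorial * (C ^ n * ‖φ n‖) := by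
        ring
    _ ≤ (n.factorial : ℝ) ^ (1 / α) * (C ^ n * ‖φ n‖) := by
        gcongr
        exact rpow_mul_inv_mul_le_rpow (by positivity) (mod_cast Nat.factorial_le hmn) hp
    _ = (C / 2 ^ l') ^ n * ((n.factorial : ℝ) ^ (1 / α) * 2 ^ (l' * n) * ‖φ n‖) := by
        rw [div_pow, pow_mul]; field_simp
    _ ≤ (C / 2 ^ l') ^ n * weightedNorm α l' φ := by gcongr; exact le_weightedNorm hφ n

lemma factorial_rpow_mul_norm_umbralCoeff_le (hα : 0 < α) (hα1 : α ≤ 1) (hC : 0 ≤ C)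
    (ha : ∀ k : ℕ+, ‖a k‖ ≤ C ^ (k : ℕ)) (hφ : ∀ n, N ≤ n → φ n = 0) {l l' : ℕ}
    (hCl' : C < 2 ^ l') (m : ℕ) :
    (m.factorial : ℝ) ^ (1 / α) * 2 ^ (l * m) * ‖umbralCoeff a φ m‖ ≤
      (2 ^ l * C / (2 ^ l' - C)) ^ m * weightedNorm α l' φ := by
  set r : ℝ := C / 2 ^ l'
  have hr0 : 0 ≤ r := by positivity
  have hr1 : r < 1 := (div_lt_one (by positivity)).2 hCl'
  calc (m.factorial : ℝ) ^ (1 / α) * 2 ^ (l * m) * ‖umbralCoeff a φ m‖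
      = (2 ^ l) ^ m * ((m.factorial : ℝ) ^ (1 / α) * ‖umbralCoeff a φ m‖) := by
        rw [pow_mul]; ring
    _ ≤ (2 ^ l) ^ m * ∑ k ∈ piFinset fun _ : Fin m => Iic N.succPNat,
          (m.factorial : ℝ) ^ (1 / α) * (m.factorial : ℝ)⁻¹ *
            (((∑ i, (k i : ℕ)).factorial : ℝ) * C ^ (∑ i, (k i : ℕ)) * ‖φ (∑ i, (k i : ℕ))‖) := by
        rw [← mul_sum, mul_assoc]
        gcongr
        exact norm_umbralCoeff_le ha hφ m
    _ ≤ (2 ^ l) ^ m * ((∑ k ∈ piFinset fun _ : Fin m => Iic N.succPNat,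
          r ^ (∑ i, (k i : ℕ))) * weightedNorm α l' φ) := by
        rw [sum_mul]
        exact mul_le_mul_of_nonneg_left (sum_le_sum fun k _ =>
          factorial_rpow_mul_inv_mul_term_le hα hα1 hC hφ l' (le_sum_pnat k)) (by positivity)
    _ ≤ (2 ^ l) ^ m * ((r / (1 - r)) ^ m * weightedNorm α l' φ) := by
        gcongr
        · exact (le_weightedNorm hφ 0).trans' (by positivity)
        · exact sum_piFinset_pow_sum_le hr0 hr1 _ m
    _ = (2 ^ l * C / (2 ^ l' - C)) ^ m * weightedNorm α l' φ := by
        rw [← mul_assoc, ← mul_pow]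
        congr 2
        have : (2 : ℝ) ^ l' - C ≠ 0 := by linarith
        simp only [r]
        field_simp

lemma weightedNorm_umbralCoeff_le (hα : 0 < α) (hα1 : α ≤ 1) (hC : 0 ≤ C)
    (ha : ∀ k : ℕ+, ‖a k‖ ≤ C ^ (k : ℕ)) (hφ : ∀ n, N ≤ n → φ n = 0) {l l' : ℕ}
    (hll' : C * (1 + 2 ^ l) < 2 ^ l') :
    weightedNorm α l (umbralCoeff a φ) ≤
      (1 - 2 ^ l * C / (2 ^ l' - C))⁻¹ * weightedNorm α l' φ := by
  have hCl' : C < 2 ^ l' := by nlinarith [pow_pos (two_pos (α := ℝ)) l]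
  set q : ℝ := 2 ^ l * C / (2 ^ l' - C)
  have hq0 : 0 ≤ q := div_nonneg (by positivity) (by linarith)
  have hq1 : q < 1 := by rw [div_lt_one (by linarith)]; linarith
  have hbound := factorial_rpow_mul_norm_umbralCoeff_le (l := l) hα hα1 hC ha hφ hCl'
  have hgeom := (summable_geometric_of_lt_one hq0 hq1).mul_right (weightedNorm α l' φ)
  calc weightedNorm α l (umbralCoeff a φ) ≤ ∑' m, q ^ m * weightedNorm α l' φ :=
        Summable.tsum_le_tsum hbound (hgeom.of_nonneg_of_le (fun _ => by positivity) hbound)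
          hgeom
    _ = (1 - q)⁻¹ * weightedNorm α l' φ := by
        rw [tsum_mul_right, tsum_geometric_of_lt_one hq0 hq1]

end

/-- Step 1 estimate in the proof of Theorem 3.5 (one-dimensional case):
boundedness of the umbral operator between weighted ℓ¹-coefficient norms. -/
theorem umbral_operator_estimate
    (α : ℝ) (hα : 0 < α) (hα1 : α ≤ 1) (C : ℝ) (hC : 0 < C)
    (a : ℕ+ → ℂ) (ha : ∀ k : ℕ+, ‖a k‖ ≤ C ^ (k : ℕ))
    (φ : ℕ → ℂ) (hφ : ∃ N : ℕ, ∀ n : ℕ, N ≤ n → φ n = 0)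
    (ψ : ℕ → ℂ) (hψ0 : ψ 0 = φ 0)
    (hψ : ∀ m : ℕ, 1 ≤ m → ψ m = (m.factorial : ℂ)⁻¹ *
      ∑' k : Fin m → ℕ+, ((∑ i, (k i : ℕ)).factorial : ℂ) *
        (∏ i, a (k i)) * φ (∑ i, (k i : ℕ)))
    (l l' : ℕ) (hll' : C * (1 + 2 ^ l) < 2 ^ l') :
    ∑' m : ℕ, (m.factorial : ℝ) ^ (1 / α) * 2 ^ (l * m) * ‖ψ m‖ ≤
      (1 - 2 ^ l * C / (2 ^ l' - C))⁻¹ *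
        ∑' n : ℕ, (n.factorial : ℝ) ^ (1 / α) * 2 ^ (l' * n) * ‖φ n‖ := by
  obtain ⟨N, hN⟩ := hφ
  have hψ_eq : ψ = umbralCoeff a φ := by
    funext m
    rcases Nat.eq_zero_or_pos m with rfl | hm
    · rw [hψ0, umbralCoeff_zero]
    · exact hψ m hm
  subst hψ_eq
  exact weightedNorm_umbralCoeff_le hα hα1 hC.le ha hN hll'
end

section
/- Let α ∈ (0,1], let C ≥ 1, and let (θ_k)_{k≥0} be complex numbers with |θ_k| ≤ C^k for all k ≥ 0. For a finitely supported sequence (φ_n)_{n≥0} of complex numbers define ψ_k := Σ_{n≥k} (n!/k!) · θ_{n−k} · φ_n for each k ≥ 0 (a finite sum). Then for every l ∈ ℕ there exist l' ∈ ℕ and C' > 0 such that for every finitely supported (φ_n)_{n≥0}: Σ_{k=0}^∞ (k!)^{1/α} · 2^{l·k} · |ψ_k| ≤ C' · Σ_{n=0}^∞ (n!)^{1/α} · 2^{l'·n} · |φ_n|. -/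
/-!
Write `ψ k = ∑ₙ K k n * φ n` with the upper triangular matrix `K k n = n! / k! * θ (n - k)`.
As for any matrix, a bound `∑ₖ w k * ‖K k n‖ ≤ v n` on its weighted columns gives the weighted
ℓ¹ estimate `∑ₖ w k * ‖ψ k‖ ≤ ∑ₙ v n * ‖φ n‖`. With `p = 1/α ≥ 1` one has
`(k!)^p * (n!/k!) ≤ (n!)^p`, so each of the at most `n + 1` nonzero entries of column `n` is at
most `(n!)^p * 2^(l n) * C^n`, and `(n + 1) * C^n` is absorbed into `2^((⌈C⌉₊ + 1) n)`.
-/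

open Finset

theorem sum_mul_norm_sum_mul_le {ι κ R : Type*} [NonUnitalSeminormedRing R]
    (s : Finset ι) (t : Finset κ) (K : ι → κ → R) (φ : κ → R) {w : ι → ℝ} {v : κ → ℝ}
    (hw : ∀ i ∈ s, 0 ≤ w i) (hcol : ∀ j ∈ t, ∑ i ∈ s, w i * ‖K i j‖ ≤ v j) :
    ∑ i ∈ s, w i * ‖∑ j ∈ t, K i j * φ j‖ ≤ ∑ j ∈ t, v j * ‖φ j‖ :=
  calc ∑ i ∈ s, w i * ‖∑ j ∈ t, K i j * φ j‖
      ≤ ∑ i ∈ s, w i * ∑ j ∈ t, ‖K i j‖ * ‖φ j‖ :=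
        sum_le_sum fun i hi => mul_le_mul_of_nonneg_left
          ((norm_sum_le _ _).trans (sum_le_sum fun j _ => norm_mul_le _ _)) (hw i hi)
    _ = ∑ j ∈ t, (∑ i ∈ s, w i * ‖K i j‖) * ‖φ j‖ := by
        simp_rw [mul_sum, sum_mul, mul_assoc]
        exact sum_comm
    _ ≤ ∑ j ∈ t, v j * ‖φ j‖ :=
        sum_le_sum fun j hj => mul_le_mul_of_nonneg_right (hcol j hj) (norm_nonneg _)

theorem Real.rpow_mul_div_le_rpow {a b p : ℝ} (ha : 0 < a) (hab : a ≤ b) (hp : 1 ≤ p) :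
    a ^ p * (b / a) ≤ b ^ p := by
  have hq : 1 ≤ b / a := (one_le_div ha).2 hab
  calc a ^ p * (b / a) ≤ a ^ p * (b / a) ^ p := by
        gcongr
        simpa using Real.rpow_le_rpow_of_exponent_le hq hp
    _ = b ^ p := by rw [← Real.mul_rpow ha.le (by positivity), mul_div_cancel₀ _ ha.ne']

theorem succ_mul_pow_le_two_pow {C : ℝ} (hC : 0 ≤ C) (n : ℕ) :
    ((n : ℝ) + 1) * C ^ n ≤ 2 ^ ((⌈C⌉₊ + 1) * n) := by
  have hn : (n : ℝ) + 1 ≤ 2 ^ n := by exact_mod_cast Nat.lt_two_pow_self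
  have hC2 : C ≤ 2 ^ ⌈C⌉₊ :=
    (Nat.le_ceil C).trans (by exact_mod_cast Nat.lt_two_pow_self.le)
  calc ((n : ℝ) + 1) * C ^ n ≤ 2 ^ n * (2 ^ ⌈C⌉₊) ^ n := by gcongr
    _ = 2 ^ ((⌈C⌉₊ + 1) * n) := by ring

section ShefferKernel

variable {p C : ℝ} {θ : ℕ → ℂ}

noncomputable def shefferKernel (θ : ℕ → ℂ) (k n : ℕ) : ℂ :=
  if k ≤ n then (n.factorial : ℂ) / (k.factorial : ℂ) * θ (n - k) else 0

theorem weight_mul_norm_shefferKernel_le (hp : 1 ≤ p) (hC : 1 ≤ C)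
    (hθ : ∀ k, ‖θ k‖ ≤ C ^ k) (l k n : ℕ) :
    (k.factorial : ℝ) ^ p * 2 ^ (l * k) * ‖shefferKernel θ k n‖ ≤
      if k ≤ n then (n.factorial : ℝ) ^ p * 2 ^ (l * n) * C ^ n else 0 := by
  unfold shefferKernel
  split_ifs with hkn
  · have hfact : (k.factorial : ℝ) ^ p * (n.factorial / k.factorial) ≤ (n.factorial : ℝ) ^ p :=
      Real.rpow_mul_div_le_rpow (by positivity) (by exact_mod_cast Nat.factorial_le hkn) hp
    have htwo : (2 : ℝ) ^ (l * k) ≤ 2 ^ (l * n) :=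
      pow_le_pow_right₀ one_le_two (Nat.mul_le_mul_left l hkn)
    have hθn : ‖θ (n - k)‖ ≤ C ^ n := (hθ _).trans (pow_le_pow_right₀ hC (n.sub_le k))
    rw [norm_mul, norm_div, Complex.norm_natCast, Complex.norm_natCast]
    calc (k.factorial : ℝ) ^ p * 2 ^ (l * k) * (n.factorial / k.factorial * ‖θ (n - k)‖)
        = (k.factorial : ℝ) ^ p * (n.factorial / k.factorial) * 2 ^ (l * k) * ‖θ (n - k)‖ := by
          ring
      _ ≤ (n.factorial : ℝ) ^ p * 2 ^ (l * n) * C ^ n := by gcongr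
  · simp

theorem sum_weight_mul_norm_shefferKernel_le (hp : 1 ≤ p) (hC : 1 ≤ C)
    (hθ : ∀ k, ‖θ k‖ ≤ C ^ k) (l N n : ℕ) :
    ∑ k ∈ range N, (k.factorial : ℝ) ^ p * 2 ^ (l * k) * ‖shefferKernel θ k n‖ ≤
      (n.factorial : ℝ) ^ p * 2 ^ ((l + ⌈C⌉₊ + 1) * n) := by
  have hcard : (#{k ∈ range N | k ≤ n} : ℝ) ≤ n + 1 := by
    exact_mod_cast (card_le_card fun k hk => by simp_all).trans
      (card_range (n + 1)).le
  calc ∑ k ∈ range N, (k.factorial : ℝ) ^ p * 2 ^ (l * k) * ‖shefferKernel θ k n‖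
      ≤ ∑ k ∈ range N, if k ≤ n then (n.factorial : ℝ) ^ p * 2 ^ (l * n) * C ^ n else 0 :=
        sum_le_sum fun k _ => weight_mul_norm_shefferKernel_le hp hC hθ l k n
    _ = #{k ∈ range N | k ≤ n} * ((n.factorial : ℝ) ^ p * 2 ^ (l * n) * C ^ n) := by
        rw [sum_ite, sum_const_zero, add_zero, sum_const, nsmul_eq_mul]
    _ ≤ (n + 1) * ((n.factorial : ℝ) ^ p * 2 ^ (l * n) * C ^ n) := by gcongr
    _ = (n.factorial : ℝ) ^ p * 2 ^ (l * n) * ((n + 1) * C ^ n) := by ring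
    _ ≤ (n.factorial : ℝ) ^ p * 2 ^ (l * n) * 2 ^ ((⌈C⌉₊ + 1) * n) := by
        gcongr
        exact succ_mul_pow_le_two_pow (zero_le_one.trans hC) n
    _ = (n.factorial : ℝ) ^ p * 2 ^ ((l + ⌈C⌉₊ + 1) * n) := by ring

end ShefferKernel

/-- Step 3 estimate in the proof of Theorem 3.5 (one-dimensional case):
boundedness of the transition operator from a Sheffer sequence to its basic
sequence between weighted ℓ¹-coefficient norms. -/
theorem sheffer_transition_estimate
    (α : ℝ) (hα : 0 < α) (hα1 : α ≤ 1) (C : ℝ) (hC : 1 ≤ C)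
    (θ : ℕ → ℂ) (hθ : ∀ k : ℕ, ‖θ k‖ ≤ C ^ k) (l : ℕ) :
    ∃ (l' : ℕ) (C' : ℝ), 0 < C' ∧
      ∀ φ : ℕ → ℂ, (∃ N : ℕ, ∀ n : ℕ, N ≤ n → φ n = 0) →
      ∀ ψ : ℕ → ℂ,
        (∀ k : ℕ, ψ k = ∑' n : ℕ, if k ≤ n then
          (n.factorial : ℂ) / (k.factorial : ℂ) * θ (n - k) * φ n else 0) →
        ∑' k : ℕ, (k.factorial : ℝ) ^ (1 / α) * 2 ^ (l * k) * ‖ψ k‖ ≤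
          C' * ∑' n : ℕ, (n.factorial : ℝ) ^ (1 / α) * 2 ^ (l' * n) * ‖φ n‖ := by
  refine ⟨l + ⌈C⌉₊ + 1, 1, one_pos, ?_⟩
  rintro φ ⟨N, hφN⟩ ψ hψ
  have hψ_sum : ∀ k, ψ k = ∑ n ∈ range N, shefferKernel θ k n * φ n := fun k => by
    rw [hψ k, tsum_eq_sum (s := range N) fun n hn => by simp [hφN n (by simpa using hn)]]
    simp only [shefferKernel, ite_mul, zero_mul]
  have hψN : ∀ k, N ≤ k → ψ k = 0 := fun k hk => by
    rw [hψ_sum k]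
    refine sum_eq_zero fun n hn => ?_
    simp [shefferKernel, show ¬k ≤ n by simp at hn; omega]
  rw [tsum_eq_sum (s := range N) fun k hk => by simp [hψN k (by simpa using hk)],
    tsum_eq_sum (s := range N) fun n hn => by simp [hφN n (by simpa using hn)], one_mul]
  simp only [hψ_sum]
  exact sum_mul_norm_sum_mul_le _ _ _ φ (fun k _ => by positivity) fun n _ =>
    sum_weight_mul_norm_shefferKernel_le (one_le_one_div hα hα1) hC hθ l N n
end

section
/- Let β > 1, let C ≥ 1, and let (θ_k)_{k≥0} be complex numbers with |θ_k| ≤ C^k · (k!)^{1/β − 1} for all k ≥ 0. For a finitely supported sequence (φ_n)_{n≥0} of complex numbers define ψ_k := Σ_{n≥k} (n!/k!) · θ_{n−k} · φ_n for each k ≥ 0 (a finite sum). Then for every l ∈ ℕ there exist l' ∈ ℕ and C' > 0 such that for every finitely supported (φ_n)_{n≥0}: Σ_{k=0}^∞ (k!)^{1/β} · 2^{l·k} · |ψ_k| ≤ C' · Σ_{n=0}^∞ (n!)^{1/β} · 2^{l'·n} · |φ_n|. -/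
/-!
Since `n! = binom(n,k) k! (n-k)!`, the bound on `θ_{n-k}` turns the coefficient
`(k!)^{1/β} 2^{lk} (n!/k!) |θ_{n-k}|` of `|φ_n|` in the weighted norm of `ψ` into at most
`(n!)^{1/β} 2^{ln} C^n binom(n,k)^{1-1/β}`, and `binom(n,k)^{1-1/β} ≤ binom(n,k) ≤ 2^n`.
Summing over the `n + 1 ≤ 2^n` indices `k ≤ n` and taking `C ≤ 2^m`, each `|φ_n|` enters with
total weight at most `(n!)^{1/β} 2^{(l+m+2)n}`.
-/

open Finset

theorem tsum_eq_sum_range_of_eq_zero {α : Type*} [AddCommMonoid α] [TopologicalSpace α]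
    {f : ℕ → α} {N : ℕ} (hf : ∀ n, N ≤ n → f n = 0) :
    ∑' n, f n = ∑ n ∈ range N, f n :=
  tsum_eq_sum fun n hn => hf n (by simpa using hn)

theorem sum_mul_norm_sum_le_of_column_bound {ι κ 𝕜 : Type*}
    [NonUnitalSeminormedRing 𝕜] (s : Finset ι) (t : Finset κ) (a : ι → κ → 𝕜) (x : κ → 𝕜)
    {u : ι → ℝ} {v : κ → ℝ}
    (hu : ∀ k, 0 ≤ u k) (hv : ∀ n ∈ t, ∑ k ∈ s, u k * ‖a k n‖ ≤ v n) :
    ∑ k ∈ s, u k * ‖∑ n ∈ t, a k n * x n‖ ≤ ∑ n ∈ t, v n * ‖x n‖ :=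
  calc ∑ k ∈ s, u k * ‖∑ n ∈ t, a k n * x n‖
      ≤ ∑ k ∈ s, ∑ n ∈ t, u k * (‖a k n‖ * ‖x n‖) := by
        refine sum_le_sum fun k _ => ?_
        rw [← mul_sum]
        gcongr
        · exact hu k
        exact (norm_sum_le _ _).trans (sum_le_sum fun n _ => norm_mul_le _ _)
    _ = ∑ n ∈ t, (∑ k ∈ s, u k * ‖a k n‖) * ‖x n‖ := by
        rw [sum_comm]
        simp only [sum_mul, mul_assoc]
    _ ≤ ∑ n ∈ t, v n * ‖x n‖ :=
        sum_le_sum fun n hn => mul_le_mul_of_nonneg_right (hv n hn) (norm_nonneg _)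

section

open Nat

theorem choose_le_choose_rpow_mul_two_pow {s : ℝ} (hs : 0 ≤ s) {n k : ℕ} (hkn : k ≤ n) :
    (n.choose k : ℝ) ≤ (n.choose k : ℝ) ^ s * 2 ^ n := by
  have hb : (1 : ℝ) ≤ n.choose k := by exact_mod_cast choose_pos hkn
  calc (n.choose k : ℝ) = (n.choose k : ℝ) ^ s * (n.choose k : ℝ) ^ (1 - s) := by
        rw [← Real.rpow_add (by positivity), add_sub_cancel, Real.rpow_one]
    _ ≤ (n.choose k : ℝ) ^ s * (n.choose k : ℝ) ^ (1 : ℝ) := by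
        gcongr
        linarith
    _ ≤ (n.choose k : ℝ) ^ s * 2 ^ n := by
        rw [Real.rpow_one]
        gcongr
        exact_mod_cast choose_le_two_pow n k

theorem factorial_rpow_mul_div_factorial_le {s : ℝ} (hs : 0 ≤ s) {k n : ℕ} (hkn : k ≤ n) :
    (k ! : ℝ) ^ s * ((n ! : ℝ) / k !) * ((n - k)! : ℝ) ^ (s - 1) ≤
      (n ! : ℝ) ^ s * 2 ^ n := by
  have hk : (0 : ℝ) < k ! := by positivity
  have hnk : (0 : ℝ) < (n - k)! := by positivity
  have hn : (n ! : ℝ) = n.choose k * k ! * (n - k)! := by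
    exact_mod_cast (choose_mul_factorial_mul_factorial hkn).symm
  calc (k ! : ℝ) ^ s * ((n ! : ℝ) / k !) * ((n - k)! : ℝ) ^ (s - 1)
      = n.choose k * ((k ! : ℝ) ^ s * ((n - k)! : ℝ) ^ s) := by
        rw [Real.rpow_sub_one hnk.ne', hn]
        field_simp
    _ ≤ (n.choose k : ℝ) ^ s * 2 ^ n * ((k ! : ℝ) ^ s * ((n - k)! : ℝ) ^ s) := by
        gcongr
        exact choose_le_choose_rpow_mul_two_pow hs hkn
    _ = (n ! : ℝ) ^ s * 2 ^ n := by
        rw [hn, Real.mul_rpow (by positivity) hnk.le, Real.mul_rpow (by positivity) hk.le]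
        ring

noncomputable def appellKernel (θ : ℕ → ℂ) (k n : ℕ) : ℂ :=
  if k ≤ n then (n ! : ℂ) / k ! * θ (n - k) else 0

variable {s C : ℝ} {θ : ℕ → ℂ}

theorem appellKernel_weight_le (hs : 0 ≤ s) (hC : 1 ≤ C)
    (hθ : ∀ k, ‖θ k‖ ≤ C ^ k * (k ! : ℝ) ^ (s - 1)) (l : ℕ) {k n : ℕ}
    (hkn : k ≤ n) :
    (k ! : ℝ) ^ s * 2 ^ (l * k) * ‖appellKernel θ k n‖ ≤
      (n ! : ℝ) ^ s * 2 ^ (l * n) * (2 * C) ^ n := by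
  rw [appellKernel, if_pos hkn, norm_mul, norm_div, Complex.norm_natCast,
    Complex.norm_natCast]
  calc (k ! : ℝ) ^ s * 2 ^ (l * k) * ((n ! : ℝ) / k ! * ‖θ (n - k)‖)
      ≤ (k ! : ℝ) ^ s * 2 ^ (l * k) *
          ((n ! : ℝ) / k ! * (C ^ (n - k) * ((n - k)! : ℝ) ^ (s - 1))) := by
        gcongr
        exact hθ (n - k)
    _ = 2 ^ (l * k) * C ^ (n - k) *
          ((k ! : ℝ) ^ s * ((n ! : ℝ) / k !) * ((n - k)! : ℝ) ^ (s - 1)) := by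
        ring
    _ ≤ 2 ^ (l * n) * C ^ n * ((n ! : ℝ) ^ s * 2 ^ n) := by
        gcongr ?_ * ?_ * ?_
        · exact pow_le_pow_right₀ one_le_two (Nat.mul_le_mul_left l hkn)
        · exact pow_le_pow_right₀ hC (n.sub_le k)
        · exact factorial_rpow_mul_div_factorial_le hs hkn
    _ = (n ! : ℝ) ^ s * 2 ^ (l * n) * (2 * C) ^ n := by
        ring

theorem sum_appellKernel_weight_le (hs : 0 ≤ s) (hC : 1 ≤ C) {m : ℕ} (hCm : C ≤ 2 ^ m)
    (hθ : ∀ k, ‖θ k‖ ≤ C ^ k * (k ! : ℝ) ^ (s - 1)) (l N n : ℕ) :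
    ∑ k ∈ range N, (k ! : ℝ) ^ s * 2 ^ (l * k) * ‖appellKernel θ k n‖ ≤
      (n ! : ℝ) ^ s * 2 ^ ((l + m + 2) * n) := by
  have hcard : #{k ∈ range N | k ≤ n} ≤ n + 1 :=
    (card_le_card fun k hk => by simp only [mem_filter, mem_range] at hk ⊢; omega).trans
      (card_range _).le
  calc ∑ k ∈ range N, (k ! : ℝ) ^ s * 2 ^ (l * k) * ‖appellKernel θ k n‖
      ≤ ∑ k ∈ range N,
          if k ≤ n then (n ! : ℝ) ^ s * 2 ^ (l * n) * (2 * C) ^ n else 0 := by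
        refine sum_le_sum fun k _ => ?_
        split_ifs with hkn
        · exact appellKernel_weight_le hs hC hθ l hkn
        · simp [appellKernel, hkn]
    _ ≤ (n + 1) * ((n ! : ℝ) ^ s * 2 ^ (l * n) * (2 * C) ^ n) := by
        rw [← sum_filter, sum_const, nsmul_eq_mul]
        gcongr
        exact_mod_cast hcard
    _ ≤ 2 ^ n * ((n ! : ℝ) ^ s * 2 ^ (l * n) * (2 * 2 ^ m) ^ n) := by
        gcongr
        exact_mod_cast n.lt_two_pow_self
    _ = (n ! : ℝ) ^ s * 2 ^ ((l + m + 2) * n) := by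
        ring

end

/-- Key estimate in the proof of Theorem 3.9 (one-dimensional case):
boundedness of the Appell--Sheffer operator between weighted ℓ¹-coefficient
norms of exponent `β > 1`, under factorially improved coefficient bounds. -/
theorem appell_operator_estimate
    (β : ℝ) (hβ : 1 < β) (C : ℝ) (hC : 1 ≤ C)
    (θ : ℕ → ℂ)
    (hθ : ∀ k : ℕ, ‖θ k‖ ≤ C ^ k * (k.factorial : ℝ) ^ (1 / β - 1))
    (l : ℕ) :
    ∃ (l' : ℕ) (C' : ℝ), 0 < C' ∧
      ∀ φ : ℕ → ℂ, (∃ N : ℕ, ∀ n : ℕ, N ≤ n → φ n = 0) →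
      ∀ ψ : ℕ → ℂ,
        (∀ k : ℕ, ψ k = ∑' n : ℕ, if k ≤ n then
          (n.factorial : ℂ) / (k.factorial : ℂ) * θ (n - k) * φ n else 0) →
        ∑' k : ℕ, (k.factorial : ℝ) ^ (1 / β) * 2 ^ (l * k) * ‖ψ k‖ ≤
          C' * ∑' n : ℕ, (n.factorial : ℝ) ^ (1 / β) * 2 ^ (l' * n) * ‖φ n‖ := by
  have hs : 0 ≤ 1 / β := by positivity
  obtain ⟨m, hm⟩ := pow_unbounded_of_one_lt C one_lt_two
  refine ⟨l + m + 2, 1, one_pos, ?_⟩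
  rintro φ ⟨N, hN⟩ ψ hψ
  have hψN : ∀ k, ψ k = ∑ n ∈ range N, appellKernel θ k n * φ n := fun k => by
    rw [hψ k, tsum_eq_sum_range_of_eq_zero (N := N) fun n hn => by simp [hN n hn]]
    simp only [appellKernel, ite_mul, zero_mul]
  have hψ0 : ∀ k, N ≤ k → ψ k = 0 := fun k hk => by
    rw [hψN k]
    exact sum_eq_zero fun n hn => by
      simp [appellKernel, show ¬k ≤ n by simp at hn; omega]
  rw [tsum_eq_sum_range_of_eq_zero fun k hk => by simp [hψ0 k hk],
    tsum_eq_sum_range_of_eq_zero fun n hn => by simp [hN n hn], one_mul]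
  simp only [hψN]
  exact sum_mul_norm_sum_le_of_column_bound _ _ _ _ (fun k => by positivity)
    fun n _ => sum_appellKernel_weight_le hs hC hm.le hθ l N n
end

section
/- Let α > 1 and let (s_n)_{n≥0} be polynomials on ℂ with each s_n of degree n. Suppose there exist l ∈ ℕ and C > 0 such that for every finitely supported sequence (φ_n)_{n≥0} of complex numbers, writing Σ_n φ_n·s_n(z) = Σ_m ψ_m·z^m (a polynomial), one has Σ_m (m!)^{1/α}·|ψ_m| ≤ C · Σ_n (n!)^{1/α}·2^{l·n}·|φ_n|. Then for every (u,z) ∈ ℂ², the series G(u,z) := Σ_{n=0}^∞ (u^n/n!)·s_n(z) converges absolutely, and the function G : ℂ × ℂ → ℂ is analytic at every point of ℂ² (i.e., G is an entire function of the two variables (u,z)). -/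
/-!
Testing the bound on `φ = δ_n` gives `‖coeff (s n) m‖ ≤ C (n!)^(1/α) 2^(l n)`, and the coefficient
vanishes for `m > n`. Hence the double series `∑ coeff (s n) m / n! · u^n z^m` is dominated by
`C (n!)^(1/α - 1) (2^(l+1) R²)^n 2^(-m)`, which is summable for every radius `R` because
`1/α < 1`. A double power series converging absolutely on all of `ℂ²` defines an entire function,
and summing it row by row gives `∑ u^n/n! · s_n(z)`.
-/

open Filter Finset Topology Polynomial
open scoped NNReal

theorem HasSum.sum_antidiagonal {α : Type*} [AddCommMonoid α] [TopologicalSpace α]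
    [ContinuousAdd α] [RegularSpace α] {f : ℕ × ℕ → α} {a : α} (h : HasSum f a) :
    HasSum (fun k => ∑ p ∈ antidiagonal k, f p) a := by
  refine (HasAntidiagonal.sigmaAntidiagonalEquivProd.hasSum_iff.2 h).sigma fun k => ?_
  rw [← Finset.sum_coe_sort]
  exact hasSum_fintype _

section DoublePowerSeries

variable {𝕜 : Type*} [NontriviallyNormedField 𝕜]

noncomputable def fstSndMonomial (k n : ℕ) : (𝕜 × 𝕜) [×k]→L[𝕜] 𝕜 :=
  (ContinuousMultilinearMap.mkPiAlgebraFin 𝕜 k 𝕜).compContinuousLinearMap fun i =>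
    if (i : ℕ) < n then ContinuousLinearMap.fst 𝕜 𝕜 𝕜 else ContinuousLinearMap.snd 𝕜 𝕜 𝕜

theorem fstSndMonomial_apply_const {k n : ℕ} (h : n ≤ k) (w : 𝕜 × 𝕜) :
    fstSndMonomial k n (fun _ => w) = w.1 ^ n * w.2 ^ (k - n) := by
  obtain ⟨d, rfl⟩ := Nat.exists_eq_add_of_le h
  simp only [fstSndMonomial, ContinuousMultilinearMap.compContinuousLinearMap_apply,
    ContinuousMultilinearMap.mkPiAlgebraFin_apply, List.prod_ofFn,
    apply_ite (fun L : 𝕜 × 𝕜 →L[𝕜] 𝕜 => L w), ContinuousLinearMap.coe_fst',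
    ContinuousLinearMap.coe_snd']
  rw [Fin.prod_univ_eq_prod_range (fun i => if i < n then w.1 else w.2), prod_range_add,
    prod_congr rfl fun i hi => if_pos (mem_range.1 hi),
    prod_congr rfl fun i _ => if_neg (Nat.not_lt.2 (Nat.le_add_right n i))]
  simp

theorem norm_fstSndMonomial_le (k n : ℕ) : ‖(fstSndMonomial k n : (𝕜 × 𝕜) [×k]→L[𝕜] 𝕜)‖ ≤ 1 := by
  refine (ContinuousMultilinearMap.norm_compContinuousLinearMap_le _ _).trans ?_
  rw [ContinuousMultilinearMap.norm_mkPiAlgebraFin, one_mul]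
  refine prod_le_one (fun i _ => norm_nonneg _) fun i _ => ?_
  split
  · exact ContinuousLinearMap.norm_fst_le 𝕜 𝕜 𝕜
  · exact ContinuousLinearMap.norm_snd_le 𝕜 𝕜 𝕜

noncomputable def doublePowerSeries (a : ℕ × ℕ → 𝕜) : FormalMultilinearSeries 𝕜 (𝕜 × 𝕜) 𝕜 :=
  fun k => ∑ p ∈ antidiagonal k, a p • fstSndMonomial k p.1

variable (a : ℕ × ℕ → 𝕜)

theorem doublePowerSeries_apply_const (k : ℕ) (w : 𝕜 × 𝕜) :
    doublePowerSeries a k (fun _ => w) = ∑ p ∈ antidiagonal k, a p * w.1 ^ p.1 * w.2 ^ p.2 := by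
  simp only [doublePowerSeries, _root_.sum_apply, smul_apply, smul_eq_mul, mul_assoc]
  refine sum_congr rfl fun p hp => ?_
  rw [HasAntidiagonal.mem_antidiagonal] at hp
  rw [fstSndMonomial_apply_const (hp ▸ Nat.le_add_right _ _), ← hp, Nat.add_sub_cancel_left]

theorem norm_doublePowerSeries_le (k : ℕ) :
    ‖doublePowerSeries a k‖ ≤ ∑ p ∈ antidiagonal k, ‖a p‖ :=
  (norm_sum_le _ _).trans <| sum_le_sum fun p _ => by
    rw [norm_smul]
    exact mul_le_of_le_one_right (norm_nonneg _) (norm_fstSndMonomial_le _ _)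

variable {a}

theorem radius_doublePowerSeries_eq_top
    (ha : ∀ r : ℝ≥0, Summable fun p : ℕ × ℕ => ‖a p‖ * (r : ℝ) ^ (p.1 + p.2)) :
    (doublePowerSeries a).radius = ⊤ := by
  refine FormalMultilinearSeries.radius_eq_top_of_summable_norm _ fun r => ?_
  refine .of_nonneg_of_le (fun k => by positivity) (fun k => ?_)
    (ha r).hasSum.sum_antidiagonal.summable
  rw [sum_congr rfl fun p hp => by rw [HasAntidiagonal.mem_antidiagonal.1 hp], ← sum_mul]
  exact mul_le_mul_of_nonneg_right (norm_doublePowerSeries_le a k) (by positivity)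

theorem summable_norm_mul_pow_mul_pow
    (ha : ∀ r : ℝ≥0, Summable fun p : ℕ × ℕ => ‖a p‖ * (r : ℝ) ^ (p.1 + p.2)) (x y : 𝕜) :
    Summable fun p : ℕ × ℕ => ‖a p * x ^ p.1 * y ^ p.2‖ := by
  refine .of_nonneg_of_le (fun p => norm_nonneg _) (fun p => ?_) (ha (max ‖x‖₊ ‖y‖₊))
  rw [norm_mul, norm_mul, norm_pow, norm_pow, pow_add, ← mul_assoc]
  gcongr <;> simp

variable [CompleteSpace 𝕜]

theorem hasFPowerSeriesOnBall_tsum_mul_pow_mul_pow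
    (ha : ∀ r : ℝ≥0, Summable fun p : ℕ × ℕ => ‖a p‖ * (r : ℝ) ^ (p.1 + p.2)) :
    HasFPowerSeriesOnBall (fun w : 𝕜 × 𝕜 => ∑' p : ℕ × ℕ, a p * w.1 ^ p.1 * w.2 ^ p.2)
      (doublePowerSeries a) 0 ⊤ where
  r_le := (radius_doublePowerSeries_eq_top ha).ge
  r_pos := ENNReal.zero_lt_top
  hasSum {w} _ := by
    simp only [zero_add, doublePowerSeries_apply_const]
    exact (summable_norm_mul_pow_mul_pow ha w.1 w.2).of_norm.hasSum.sum_antidiagonal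

theorem analyticAt_tsum_mul_pow_mul_pow
    (ha : ∀ r : ℝ≥0, Summable fun p : ℕ × ℕ => ‖a p‖ * (r : ℝ) ^ (p.1 + p.2)) (w : 𝕜 × 𝕜) :
    AnalyticAt 𝕜 (fun w : 𝕜 × 𝕜 => ∑' p : ℕ × ℕ, a p * w.1 ^ p.1 * w.2 ^ p.2) w :=
  (hasFPowerSeriesOnBall_tsum_mul_pow_mul_pow ha).analyticAt_of_mem (by simp)

end DoublePowerSeries

theorem Summable.norm_of_hasSum_fiberwise {β γ E : Type*} [SeminormedAddCommGroup E]
    {f : β × γ → E} {g : β → E} (hf : Summable fun p => ‖f p‖)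
    (hg : ∀ b, HasSum (fun c => f (b, c)) (g b)) : Summable fun b => ‖g b‖ :=
  .of_nonneg_of_le (fun _ => norm_nonneg _)
    (fun b => (hg b).norm_le_of_bounded (hf.prod_factor b).hasSum fun _ => le_rfl) hf.prod

theorem Polynomial.hasSum_coeff_mul_pow {R : Type*} [Semiring R] [TopologicalSpace R]
    (p : R[X]) (x : R) : HasSum (fun m => p.coeff m * x ^ m) (p.eval x) := by
  rw [eval_eq_sum_range]
  refine hasSum_sum_of_ne_finset_zero fun m hm => ?_
  rw [coeff_eq_zero_of_natDegree_lt (by simpa using hm), zero_mul]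

theorem summable_pow_mul_factorial_rpow_div_factorial {θ K : ℝ} (hθ : θ < 1) (hK : 0 < K) :
    Summable fun n : ℕ => K ^ n * (n.factorial : ℝ) ^ θ / n.factorial := by
  refine summable_of_ratio_test_tendsto_lt_one zero_lt_one
    (Eventually.of_forall fun n => by positivity) ?_
  have hdecay : Tendsto (fun n : ℕ => ((n : ℝ) + 1) ^ (θ - 1)) atTop (𝓝 0) := by
    rw [← neg_sub]
    exact (tendsto_rpow_neg_atTop (by linarith)).comp
      (tendsto_atTop_add_const_right _ 1 tendsto_natCast_atTop_atTop)
  have hratio := hdecay.const_mul K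
  rw [mul_zero] at hratio
  refine hratio.congr fun n => ?_
  have hn : (0 : ℝ) < n + 1 := by positivity
  rw [Real.norm_of_nonneg (by positivity), Real.norm_of_nonneg (by positivity), Nat.factorial_succ,
    Nat.cast_mul, Nat.cast_succ, Real.mul_rpow hn.le (by positivity), Real.rpow_sub_one hn.ne',
    pow_succ]
  field_simp

theorem norm_coeff_le_of_weighted_bound {𝕜 : Type*} [NormedField 𝕜] {s : ℕ → 𝕜[X]}
    {v w : ℕ → ℝ} {C : ℝ} (hv : ∀ m, 1 ≤ v m)
    (hb : ∀ φ : ℕ →₀ 𝕜, ∑' m, v m * ‖(∑ n ∈ φ.support, φ n • s n).coeff m‖ ≤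
      C * ∑' n, w n * ‖φ n‖) (n m : ℕ) :
    ‖(s n).coeff m‖ ≤ C * w n := by
  have hsingle := hb (Finsupp.single n 1)
  have hrhs : ∑' k, w k * ‖Finsupp.single n (1 : 𝕜) k‖ = w n := by
    rw [tsum_eq_single n fun k hk => by simp [hk]]
    simp
  simp only [Finsupp.support_single n one_ne_zero, sum_singleton, Finsupp.single_eq_same,
    one_smul, hrhs] at hsingle
  have hsummable : Summable fun m => v m * ‖(s n).coeff m‖ :=
    summable_of_ne_finset_zero (s := (s n).support) fun m hm => by simp [notMem_support_iff.1 hm]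
  calc ‖(s n).coeff m‖ ≤ v m * ‖(s n).coeff m‖ := le_mul_of_one_le_left (norm_nonneg _) (hv m)
    _ ≤ ∑' m, v m * ‖(s n).coeff m‖ :=
      hsummable.le_tsum m fun k _ => mul_nonneg (zero_le_one.trans (hv k)) (norm_nonneg _)
    _ ≤ C * w n := hsingle

theorem summable_norm_coeff_div_factorial_mul_pow {𝕜 : Type*} [RCLike 𝕜] {s : ℕ → 𝕜[X]}
    (hdeg : ∀ n, (s n).natDegree ≤ n) {θ K C : ℝ} (hθ : θ < 1) (hK : 0 < K) (hC : 0 ≤ C)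
    (hcoeff : ∀ n m, ‖(s n).coeff m‖ ≤ C * ((n.factorial : ℝ) ^ θ * K ^ n)) (r : ℝ≥0) :
    Summable fun p : ℕ × ℕ =>
      ‖(s p.1).coeff p.2 / (p.1.factorial : 𝕜)‖ * (r : ℝ) ^ (p.1 + p.2) := by
  set R : ℝ := max 1 r
  have hR : 1 ≤ R := le_max_left _ _
  -- the factor `2 ^ n * (1 / 2) ^ m ≥ 1` pays for the `m ≤ n` nonzero coefficients in row `n`
  have hbound : ∀ p : ℕ × ℕ,
      ‖(s p.1).coeff p.2 / (p.1.factorial : 𝕜)‖ * (r : ℝ) ^ (p.1 + p.2) ≤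
      C * ((2 * K * R ^ 2) ^ p.1 * (p.1.factorial : ℝ) ^ θ / p.1.factorial) * (1 / 2) ^ p.2 := by
    rintro ⟨n, m⟩
    dsimp only
    rcases lt_or_ge n m with hnm | hmn
    · rw [coeff_eq_zero_of_natDegree_lt ((hdeg n).trans_lt hnm), zero_div, norm_zero, zero_mul]
      positivity
    have hr : (r : ℝ) ^ (n + m) ≤ R ^ n * R ^ n := by
      rw [← pow_add]
      exact (pow_le_pow_left₀ r.2 (le_max_right _ _) _).trans (pow_le_pow_right₀ hR (by omega))
    have hhalf : 1 ≤ 2 ^ n * (1 / 2 : ℝ) ^ m := by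
      calc (1 : ℝ) = 2 ^ n * (1 / 2) ^ n := by rw [← mul_pow]; norm_num
        _ ≤ 2 ^ n * (1 / 2) ^ m :=
          mul_le_mul_of_nonneg_left (pow_le_pow_of_le_one (by norm_num) (by norm_num) hmn)
            (by positivity)
    calc ‖(s n).coeff m / (n.factorial : 𝕜)‖ * (r : ℝ) ^ (n + m)
        ≤ C * ((n.factorial : ℝ) ^ θ * K ^ n) / n.factorial * (R ^ n * R ^ n) := by
          rw [norm_div, RCLike.norm_natCast]
          gcongr
          exact hcoeff n m
      _ ≤ C * ((n.factorial : ℝ) ^ θ * K ^ n) / n.factorial * (R ^ n * R ^ n) *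
            (2 ^ n * (1 / 2) ^ m) :=
          le_mul_of_one_le_right (by positivity) hhalf
      _ = C * ((2 * K * R ^ 2) ^ n * (n.factorial : ℝ) ^ θ / n.factorial) * (1 / 2) ^ m := by ring
  refine .of_nonneg_of_le (fun p => by positivity) hbound ?_
  exact ((summable_pow_mul_factorial_rpow_div_factorial hθ (by positivity)).mul_left C
    ).mul_of_nonneg summable_geometric_two (fun _ => by positivity) fun _ => by positivity

/-- Proposition 3.6(i): if the Sheffer operator of `(s_n)` is bounded between
the weighted ℓ¹-coefficient norms of exponent `α > 1`, then the generating
function `G(u,z) = Σ (u^n/n!)·s_n(z)` converges absolutely everywhere and is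
an entire function of the two variables. -/
theorem generating_function_entire_of_bounded_sheffer
    (α : ℝ) (hα : 1 < α)
    (s : ℕ → Polynomial ℂ) (hdeg : ∀ n, (s n).natDegree = n)
    (hbdd : ∃ (l : ℕ) (C : ℝ), 0 < C ∧ ∀ φ : ℕ →₀ ℂ,
      ∑' m : ℕ, (m.factorial : ℝ) ^ (1 / α) *
          ‖(∑ n ∈ φ.support, φ n • s n).coeff m‖ ≤
        C * ∑' n : ℕ, (n.factorial : ℝ) ^ (1 / α) * 2 ^ (l * n) * ‖φ n‖) :
    (∀ u z : ℂ, Summable fun n : ℕ =>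
      ‖u ^ n / (n.factorial : ℂ) * (s n).eval z‖) ∧
    ∀ p : ℂ × ℂ, AnalyticAt ℂ
      (fun q : ℂ × ℂ => ∑' n : ℕ, q.1 ^ n / (n.factorial : ℂ) * (s n).eval q.2) p := by
  obtain ⟨l, C, hC, hb⟩ := hbdd
  have hcoeff : ∀ n m, ‖(s n).coeff m‖ ≤ C * ((n.factorial : ℝ) ^ (1 / α) * (2 ^ l) ^ n) := by
    simpa only [← pow_mul, mul_assoc] using norm_coeff_le_of_weighted_bound
      (fun m => Real.one_le_rpow (Nat.one_le_cast.2 m.factorial_pos) (by positivity)) hb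
  set a : ℕ × ℕ → ℂ := fun p => (s p.1).coeff p.2 / (p.1.factorial : ℂ)
  have ha : ∀ r : ℝ≥0, Summable fun p : ℕ × ℕ => ‖a p‖ * (r : ℝ) ^ (p.1 + p.2) :=
    summable_norm_coeff_div_factorial_mul_pow (fun n => (hdeg n).le)
      ((div_lt_one (by linarith)).2 hα) (by positivity) hC.le hcoeff
  have hrow : ∀ u z : ℂ, ∀ n, HasSum (fun m => a (n, m) * u ^ n * z ^ m)
      (u ^ n / (n.factorial : ℂ) * (s n).eval z) := fun u z n =>
    (((s n).hasSum_coeff_mul_pow z).mul_left _).congr_fun fun m => by ring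
  refine ⟨fun u z => (summable_norm_mul_pow_mul_pow ha u z).norm_of_hasSum_fiberwise (hrow u z),
    fun w => ?_⟩
  have hG : ∀ q : ℂ × ℂ, ∑' n : ℕ, q.1 ^ n / (n.factorial : ℂ) * (s n).eval q.2 =
      ∑' p : ℕ × ℕ, a p * q.1 ^ p.1 * q.2 ^ p.2 := fun q =>
    ((summable_norm_mul_pow_mul_pow ha q.1 q.2).of_norm.hasSum.prod_fiberwise
      (hrow q.1 q.2)).tsum_eq
  simpa only [hG] using analyticAt_tsum_mul_pow_mul_pow ha w
end

section
/- Let α > 1 and let (a_k)_{k≥1} be complex numbers with a_1 = 1. Define the polynomials of binomial type p_0(z) := 1 and, for n ≥ 1, p_n(z) := n! · Σ_{m=1}^n (z^m/m!) · Σ_{(k_1,…,k_m) ∈ (ℕ_{≥1})^m, k_1+⋯+k_m=n} a_{k_1}·a_{k_2}⋯a_{k_m}. Suppose there exist l ∈ ℕ and C > 0 such that for every finitely supported sequence (φ_n)_{n≥0} of complex numbers, writing Σ_n φ_n·p_n(z) = Σ_m ψ_m·z^m, one has Σ_m (m!)^{1/α}·|ψ_m| ≤ C · Σ_n (n!)^{1/α}·2^{l·n}·|φ_n|.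 Then a_k = 0 for all k ≥ 2; equivalently, p_n(z) = z^n for all n. -/
/-!
Write `A(u) = ∑_{k ≥ 1} a_k u^k`. The coefficient of `z^m` in `p_n` is `n!/m!` times the
coefficient of `u^n` in `A(u)^m`, so testing the estimate on `φ = δ_n` bounds the latter by
`C 2^{ln} (m!/n!)^{1/q}`, where `1/α + 1/q = 1`. Hence `A` is entire and `|A(u)^m|` grows at most
like `(m!)^{1/q}`. Summing the exponential series, with `∑ w^n / (n!)^{1/α} ≤ 3 exp((2w)^α)` by
Young's inequality, gives `|exp(z A(u))| ≤ 9C exp((2|z|)^α + (2^{l+1}|u|)^q)`. Testing this on `z`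
in the direction of `conj A(u)` with `|z|^α` of the size of the constant forces
`|A(u)| = O(1 + |u|)`, and Cauchy's estimates leave no room for the coefficients `a_k`, `k ≥ 2`.
-/

namespace BinomialType

open Finset Real Filter Topology

noncomputable def compositionCoeff (b : ℕ → ℂ) (m n : ℕ) : ℂ :=
  ∑ g ∈ Nat.antidiagonalTuple m n, ∏ i, b (g i)

lemma compositionCoeff_zero_left (b : ℕ → ℂ) (n : ℕ) :
    compositionCoeff b 0 n = if n = 0 then 1 else 0 := by
  cases n <;> simp [compositionCoeff]

lemma compositionCoeff_one_left (b : ℕ → ℂ) (n : ℕ) : compositionCoeff b 1 n = b n := by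
  simp [compositionCoeff]

lemma compositionCoeff_succ_left (b : ℕ → ℂ) (m n : ℕ) :
    compositionCoeff b (m + 1) n =
      ∑ kl ∈ antidiagonal n, b kl.1 * compositionCoeff b m kl.2 := by
  simp only [compositionCoeff, mul_sum, sum_sigma']
  refine sum_nbij' (fun g => ⟨(g 0, n - g 0), Fin.tail g⟩) (fun x => Fin.cons x.1.1 x.2)
    ?_ ?_ ?_ ?_ ?_
  · intro g hg
    simp only [Nat.mem_antidiagonalTuple, Fin.sum_univ_succ] at hg
    simp [Nat.mem_antidiagonalTuple, Fin.tail, ← hg]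
  · rintro ⟨⟨k, l⟩, h⟩ hx
    simp only [mem_sigma, HasAntidiagonal.mem_antidiagonal, Nat.mem_antidiagonalTuple] at hx
    simp [Nat.mem_antidiagonalTuple, Fin.sum_cons, hx.2, hx.1]
  · intro g _
    simp
  · rintro ⟨⟨k, l⟩, h⟩ hx
    simp only [mem_sigma, HasAntidiagonal.mem_antidiagonal, Nat.mem_antidiagonalTuple] at hx
    simp [← hx.1]
  · intro g _
    simp [Fin.prod_univ_succ, Fin.tail]

lemma compositionCoeff_eq_zero_of_lt {b : ℕ → ℂ} (hb : b 0 = 0) {m n : ℕ} (h : n < m) :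
    compositionCoeff b m n = 0 := by
  refine sum_eq_zero fun g hg => prod_eq_zero_iff.2 ?_
  rw [Nat.mem_antidiagonalTuple] at hg
  by_contra! hpos
  have hm : m ≤ ∑ i, g i := by
    simpa using sum_le_sum fun i (_ : i ∈ univ) =>
      Nat.one_le_iff_ne_zero.2 fun h0 => hpos i (mem_univ i) (by rw [h0, hb])
  omega

lemma compositionCoeff_indicator_one (m n : ℕ) :
    compositionCoeff (fun t => if t = 1 then 1 else 0) m n = if m = n then 1 else 0 := by
  simp [compositionCoeff, prod_boole, ← funext_iff, sum_ite_eq', Nat.mem_antidiagonalTuple]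

lemma sum_antidiagonal_mul_compositionCoeff (b : ℕ → ℂ) (u : ℂ) (m n : ℕ) :
    ∑ kl ∈ antidiagonal n, b kl.1 * u ^ kl.1 * (compositionCoeff b m kl.2 * u ^ kl.2) =
      compositionCoeff b (m + 1) n * u ^ n := by
  rw [compositionCoeff_succ_left, sum_mul]
  refine sum_congr rfl fun kl hkl => ?_
  rw [← HasAntidiagonal.mem_antidiagonal.1 hkl, pow_add]
  ring

section PowerSeries

variable {b : ℕ → ℂ} {u : ℂ}

lemma summable_norm_compositionCoeff_mul_pow (hb : Summable fun t => ‖b t * u ^ t‖) (m : ℕ) :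
    Summable fun n => ‖compositionCoeff b m n * u ^ n‖ := by
  induction m with
  | zero =>
    refine summable_of_ne_finset_zero (s := {0}) fun n hn => ?_
    simp [compositionCoeff_zero_left, Finset.mem_singleton.not.1 hn]
  | succ m ih =>
    simpa only [sum_antidiagonal_mul_compositionCoeff] using
      summable_norm_sum_mul_antidiagonal_of_summable_norm hb ih

lemma tsum_compositionCoeff_mul_pow (hb : Summable fun t => ‖b t * u ^ t‖) (m : ℕ) :
    ∑' n, compositionCoeff b m n * u ^ n = (∑' t, b t * u ^ t) ^ m := by
  induction m with
  | zero => simp [compositionCoeff_zero_left]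
  | succ m ih =>
    rw [pow_succ', ← ih, tsum_mul_tsum_eq_tsum_sum_antidiagonal_of_summable_norm hb
      (summable_norm_compositionCoeff_mul_pow hb m)]
    simp only [sum_antidiagonal_mul_compositionCoeff]

end PowerSeries

lemma rpow_inv_mul_rpow_inv {p q : ℝ} (hpq : p.HolderConjugate q) {x : ℝ} (hx : 0 ≤ x) :
    x ^ p⁻¹ * x ^ q⁻¹ = x := by
  rw [← rpow_add' hx (by simp [hpq.inv_add_inv_eq_one]), hpq.inv_add_inv_eq_one, rpow_one]

lemma le_mul_rpow_div_rpow_of_holderConjugate {p q : ℝ} (hpq : p.HolderConjugate q)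
    {x y s K : ℝ} (hx : 0 < x) (hy : 0 < y) (h : x ^ p⁻¹ * (y / x * s) ≤ K * y ^ p⁻¹) :
    s ≤ K * (x ^ q⁻¹ / y ^ q⁻¹) := by
  have hx' := rpow_inv_mul_rpow_inv hpq hx.le
  have hy' := rpow_inv_mul_rpow_inv hpq hy.le
  have hxp : 0 < x ^ p⁻¹ := by positivity
  have hyp : 0 < y ^ p⁻¹ := by positivity
  have hxq : 0 < x ^ q⁻¹ := by positivity
  have hyq : 0 < y ^ q⁻¹ := by positivity
  generalize x ^ p⁻¹ = xp at *
  generalize y ^ p⁻¹ = yp at *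
  generalize x ^ q⁻¹ = xq at *
  generalize y ^ q⁻¹ = yq at *
  subst hx' hy'
  rw [mul_div_assoc', le_div_iff₀ hyq]
  field_simp at h
  linarith

lemma pow_div_factorial_rpow_le {p q : ℝ} (hpq : p.HolderConjugate q) {w : ℝ} (hw : 0 ≤ w)
    (n : ℕ) :
    w ^ n / (n.factorial : ℝ) ^ p⁻¹ ≤ ((2 * w) ^ p) ^ n / n.factorial + (1 / 2) ^ n := by
  have hfac : (0 : ℝ) < n.factorial := mod_cast n.factorial_pos
  have hx : 0 ≤ (2 * w) ^ n / (n.factorial : ℝ) ^ p⁻¹ := by positivity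
  have hy : (0 : ℝ) ≤ (1 / 2) ^ n := by positivity
  have hxp : ((2 * w) ^ n / (n.factorial : ℝ) ^ p⁻¹) ^ p = ((2 * w) ^ p) ^ n / n.factorial := by
    rw [div_rpow (by positivity) (by positivity), ← rpow_mul hfac.le, inv_mul_cancel₀ hpq.ne_zero,
      rpow_one, ← rpow_natCast, ← rpow_natCast, ← rpow_mul (by positivity),
      ← rpow_mul (by positivity), mul_comm (n : ℝ)]
  calc w ^ n / (n.factorial : ℝ) ^ p⁻¹
      = (2 * w) ^ n / (n.factorial : ℝ) ^ p⁻¹ * (1 / 2) ^ n := by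
        rw [div_mul_eq_mul_div, ← mul_pow, mul_right_comm]
        norm_num
    _ ≤ ((2 * w) ^ n / (n.factorial : ℝ) ^ p⁻¹) ^ p / p + ((1 / 2 : ℝ) ^ n) ^ q / q :=
        young_inequality_of_nonneg hx hy hpq
    _ ≤ ((2 * w) ^ p) ^ n / n.factorial + (1 / 2) ^ n := by
        rw [hxp]
        refine add_le_add (div_le_self (by positivity) hpq.lt.le) ?_
        refine (div_le_self (by positivity) hpq.symm.lt.le).trans ?_
        exact rpow_le_self_of_le_one hy (pow_le_one₀ (by norm_num) (by norm_num)) hpq.symm.lt.le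

lemma summable_pow_div_factorial_rpow {p q : ℝ} (hpq : p.HolderConjugate q) {w : ℝ}
    (hw : 0 ≤ w) : Summable fun n : ℕ => w ^ n / (n.factorial : ℝ) ^ p⁻¹ :=
  .of_nonneg_of_le (fun n => by positivity) (pow_div_factorial_rpow_le hpq hw)
    ((summable_pow_div_factorial _).add summable_geometric_two)

lemma tsum_pow_div_factorial_rpow_le {p q : ℝ} (hpq : p.HolderConjugate q) {w : ℝ}
    (hw : 0 ≤ w) : ∑' n : ℕ, w ^ n / (n.factorial : ℝ) ^ p⁻¹ ≤ 3 * exp ((2 * w) ^ p) := by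
  have hexp : (1 : ℝ) ≤ exp ((2 * w) ^ p) := one_le_exp (by positivity)
  calc ∑' n : ℕ, w ^ n / (n.factorial : ℝ) ^ p⁻¹
      ≤ ∑' n : ℕ, (((2 * w) ^ p) ^ n / n.factorial + (1 / 2) ^ n) :=
        (summable_pow_div_factorial_rpow hpq hw).tsum_le_tsum (pow_div_factorial_rpow_le hpq hw)
          ((summable_pow_div_factorial _).add summable_geometric_two)
    _ = exp ((2 * w) ^ p) + 2 := by
        rw [(summable_pow_div_factorial _).tsum_add summable_geometric_two, tsum_geometric_two,
          exp_eq_exp_ℝ, NormedSpace.exp_eq_tsum_div]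
    _ ≤ 3 * exp ((2 * w) ^ p) := by linarith

lemma norm_le_of_norm_exp_mul_le {p q : ℝ} (hpq : p.HolderConjugate q) {w : ℂ} {A B : ℝ}
    (hA : 0 < A) (hB : 0 ≤ B) (h : ∀ z : ℂ, ‖Complex.exp (z * w)‖ ≤ exp (A + B * ‖z‖ ^ p)) :
    ‖w‖ ≤ (1 + B) * A ^ q⁻¹ := by
  rcases eq_or_ne w 0 with rfl | hw
  · simp only [norm_zero]
    positivity
  set R := A ^ p⁻¹
  have hR : 0 < R := rpow_pos_of_pos hA _
  have hRp : R ^ p = A := by rw [← rpow_mul hA.le, inv_mul_cancel₀ hpq.ne_zero, rpow_one]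
  have hz := h ((R * ‖w‖ : ℝ) / w)
  rw [div_mul_cancel₀ _ hw, Complex.norm_exp_ofReal, norm_div, Complex.norm_real,
    Real.norm_of_nonneg (by positivity), mul_div_cancel_right₀ _ (norm_ne_zero_iff.2 hw), hRp,
    exp_le_exp] at hz
  refine le_of_mul_le_mul_left ?_ hR
  calc R * ‖w‖ ≤ A + B * A := hz
    _ = R * ((1 + B) * A ^ q⁻¹) := by rw [mul_left_comm, rpow_inv_mul_rpow_inv hpq hA.le]; ring

lemma eq_zero_of_norm_tsum_le_linear {b : ℕ → ℂ}
    (hb : ∀ u : ℂ, Summable fun t => ‖b t * u ^ t‖) {K : ℝ}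
    (hlin : ∀ u : ℂ, ‖∑' t, b t * u ^ t‖ ≤ K * (1 + ‖u‖)) {k : ℕ} (hk : 2 ≤ k) :
    b k = 0 := by
  set P := FormalMultilinearSeries.ofScalars ℂ b
  have hrad : P.radius = ⊤ := P.radius_eq_top_of_summable_norm fun r => by
    simpa [P, norm_mul] using hb r
  have hP : HasFPowerSeriesOnBall P.sum P 0 ⊤ := hrad ▸ P.hasFPowerSeriesOnBall (by simp [hrad])
  have hsum : P.sum = fun u => ∑' t, b t * u ^ t := FormalMultilinearSeries.ofScalarsSum_eq_tsum b
  have hdiff : Differentiable ℂ P.sum := fun u => (hP.analyticAt_of_mem (by simp)).differentiableAt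
  have hderiv : iteratedDeriv k P.sum 0 = k.factorial * b k := by
    rw [iteratedDeriv_eq_iteratedFDeriv, ← hP.factorial_smul]
    simp [P]
  have hK : 0 ≤ K := by simpa using (norm_nonneg _).trans (hlin 0)
  have hcauchy : ∀ R : ℝ, 1 ≤ R → ‖b k‖ ≤ 2 * K / R := by
    intro R hR
    have h := Complex.norm_iteratedDeriv_le_of_forall_mem_sphere_norm_le (c := 0) k
      (by linarith) hdiff.diffContOnCl fun z (hz : z ∈ Metric.sphere 0 R) => (by
        rw [hsum]; simpa [mem_sphere_zero_iff_norm.1 hz] using hlin z : ‖P.sum z‖ ≤ K * (1 + R))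
    rw [hderiv, norm_mul, Complex.norm_natCast, mul_div_assoc] at h
    calc ‖b k‖ ≤ K * (1 + R) / R ^ k := le_of_mul_le_mul_left h (mod_cast k.factorial_pos)
      _ ≤ K * (2 * R) / R ^ 2 := by
          gcongr
          linarith
      _ = 2 * K / R := by field_simp
  have hlim : Tendsto (fun R : ℝ => 2 * K / R) atTop (𝓝 0) :=
    tendsto_const_nhds.div_atTop tendsto_id
  exact norm_le_zero_iff.1 (ge_of_tendsto hlim (eventually_atTop.2 ⟨1, hcauchy⟩))

def CompositionCoeffBound (b : ℕ → ℂ) (q C c : ℝ) : Prop :=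
  ∀ m n, ‖compositionCoeff b m n‖ ≤
    C * c ^ n * ((m.factorial : ℝ) ^ q⁻¹ / (n.factorial : ℝ) ^ q⁻¹)

section CompositionCoeffBound

variable {p q C c : ℝ} {b : ℕ → ℂ}

lemma CompositionCoeffBound.norm_compositionCoeff_mul_pow_le (hS : CompositionCoeffBound b q C c)
    (u : ℂ) (m n : ℕ) :
    ‖compositionCoeff b m n * u ^ n‖ ≤
      C * (m.factorial : ℝ) ^ q⁻¹ * ((c * ‖u‖) ^ n / (n.factorial : ℝ) ^ q⁻¹) := by
  rw [norm_mul, norm_pow]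
  calc ‖compositionCoeff b m n‖ * ‖u‖ ^ n
      ≤ C * c ^ n * ((m.factorial : ℝ) ^ q⁻¹ / (n.factorial : ℝ) ^ q⁻¹) * ‖u‖ ^ n := by
        gcongr
        exact hS m n
    _ = C * (m.factorial : ℝ) ^ q⁻¹ * ((c * ‖u‖) ^ n / (n.factorial : ℝ) ^ q⁻¹) := by ring

lemma CompositionCoeffBound.summable_norm_mul_pow (hS : CompositionCoeffBound b q C c)
    (hpq : p.HolderConjugate q) (hc : 0 ≤ c) (u : ℂ) : Summable fun t => ‖b t * u ^ t‖ := by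
  refine .of_nonneg_of_le (fun t => norm_nonneg _) (fun t => ?_)
    ((summable_pow_div_factorial_rpow hpq.symm (by positivity : 0 ≤ c * ‖u‖)).mul_left C)
  simpa [compositionCoeff_one_left] using hS.norm_compositionCoeff_mul_pow_le u 1 t

lemma CompositionCoeffBound.norm_tsum_mul_pow_pow_le (hS : CompositionCoeffBound b q C c)
    (hpq : p.HolderConjugate q) (hc : 0 ≤ c) (u : ℂ) (m : ℕ) :
    ‖(∑' t, b t * u ^ t) ^ m‖ ≤
      C * (m.factorial : ℝ) ^ q⁻¹ * ∑' n : ℕ, (c * ‖u‖) ^ n / (n.factorial : ℝ) ^ q⁻¹ := by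
  have hb := hS.summable_norm_mul_pow hpq hc u
  rw [← tsum_compositionCoeff_mul_pow hb, ← tsum_mul_left]
  exact (norm_tsum_le_tsum_norm (summable_norm_compositionCoeff_mul_pow hb m)).trans
    ((summable_norm_compositionCoeff_mul_pow hb m).tsum_le_tsum
      (hS.norm_compositionCoeff_mul_pow_le u m)
      ((summable_pow_div_factorial_rpow hpq.symm (by positivity)).mul_left _))

lemma CompositionCoeffBound.norm_exp_mul_tsum_mul_pow_le (hS : CompositionCoeffBound b q C c)
    (hpq : p.HolderConjugate q) (hc : 0 ≤ c) (z u : ℂ) :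
    ‖Complex.exp (z * ∑' t, b t * u ^ t)‖ ≤
      9 * C * exp ((2 * c * ‖u‖) ^ q + (2 * ‖z‖) ^ p) := by
  set A := ∑' t, b t * u ^ t
  set G := ∑' n : ℕ, (c * ‖u‖) ^ n / (n.factorial : ℝ) ^ q⁻¹
  have hC : 0 ≤ C := by simpa [compositionCoeff_zero_left] using (norm_nonneg _).trans (hS 0 0)
  have hterm : ∀ m : ℕ,
      (‖z‖ * ‖A‖) ^ m / m.factorial ≤ C * G * (‖z‖ ^ m / (m.factorial : ℝ) ^ p⁻¹) := by
    intro m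
    have hfac : (0 : ℝ) < m.factorial := mod_cast m.factorial_pos
    calc (‖z‖ * ‖A‖) ^ m / m.factorial = ‖z‖ ^ m * ‖A ^ m‖ / m.factorial := by
          rw [mul_pow, norm_pow]
      _ ≤ ‖z‖ ^ m * (C * (m.factorial : ℝ) ^ q⁻¹ * G) / m.factorial := by
          gcongr
          exact hS.norm_tsum_mul_pow_pow_le hpq hc u m
      _ = C * G * (‖z‖ ^ m / (m.factorial : ℝ) ^ p⁻¹) := by
          nth_rw 2 [← rpow_inv_mul_rpow_inv hpq hfac.le]
          field_simp
  calc ‖Complex.exp (z * A)‖ ≤ exp (‖z‖ * ‖A‖) := by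
        simpa using Complex.norm_exp_le_exp_norm (z * A)
    _ = ∑' m : ℕ, (‖z‖ * ‖A‖) ^ m / m.factorial := by
        rw [exp_eq_exp_ℝ, NormedSpace.exp_eq_tsum_div]
    _ ≤ ∑' m : ℕ, C * G * (‖z‖ ^ m / (m.factorial : ℝ) ^ p⁻¹) :=
        (summable_pow_div_factorial _).tsum_le_tsum hterm
          ((summable_pow_div_factorial_rpow hpq (norm_nonneg z)).mul_left _)
    _ ≤ C * (3 * exp ((2 * (c * ‖u‖)) ^ q)) * (3 * exp ((2 * ‖z‖) ^ p)) := by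
        rw [tsum_mul_left]
        gcongr
        · exact tsum_pow_div_factorial_rpow_le hpq.symm (by positivity)
        · exact tsum_pow_div_factorial_rpow_le hpq (norm_nonneg z)
    _ = 9 * C * exp ((2 * c * ‖u‖) ^ q + (2 * ‖z‖) ^ p) := by rw [exp_add]; ring_nf

lemma CompositionCoeffBound.exists_norm_tsum_mul_pow_le_linear
    (hS : CompositionCoeffBound b q C c) (hpq : p.HolderConjugate q) (hc : 0 ≤ c) :
    ∃ K, ∀ u : ℂ, ‖∑' t, b t * u ^ t‖ ≤ K * (1 + ‖u‖) := by
  have hC : 1 ≤ C := by simpa [compositionCoeff_zero_left] using hS 0 0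
  obtain ⟨D, hD0, hD⟩ : ∃ D, 0 ≤ D ∧ exp D = 9 * C :=
    ⟨log (9 * C), log_nonneg (by linarith), exp_log (by linarith)⟩
  refine ⟨(1 + 2 ^ p) * max ((D + 1) ^ q⁻¹) (2 * c), fun u => ?_⟩
  set M := (2 * c * ‖u‖) ^ q with hM
  have hexp : ∀ z : ℂ, ‖Complex.exp (z * ∑' t, b t * u ^ t)‖ ≤
      exp (D + 1 + M + 2 ^ p * ‖z‖ ^ p) := fun z => by
    refine (hS.norm_exp_mul_tsum_mul_pow_le hpq hc z u).trans ?_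
    rw [mul_rpow zero_le_two (norm_nonneg z), ← hD, ← exp_add]
    exact exp_le_exp.2 (by rw [hM]; linarith)
  have hMq : M ^ q⁻¹ = 2 * c * ‖u‖ := by
    rw [← rpow_mul (by positivity), mul_inv_cancel₀ hpq.symm.ne_zero, rpow_one]
  calc ‖∑' t, b t * u ^ t‖ ≤ (1 + 2 ^ p) * (D + 1 + M) ^ q⁻¹ :=
        norm_le_of_norm_exp_mul_le hpq (by positivity) (by positivity) hexp
    _ ≤ (1 + 2 ^ p) * ((D + 1) ^ q⁻¹ + 2 * c * ‖u‖) := by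
        rw [← hMq]
        gcongr
        exact rpow_add_le_add_rpow (by positivity) (by positivity) hpq.symm.inv_nonneg
          (inv_le_one_of_one_le₀ hpq.symm.lt.le)
    _ ≤ (1 + 2 ^ p) *
          (max ((D + 1) ^ q⁻¹) (2 * c) + max ((D + 1) ^ q⁻¹) (2 * c) * ‖u‖) := by
        gcongr
        exacts [le_max_left _ _, le_max_right _ _]
    _ = (1 + 2 ^ p) * max ((D + 1) ^ q⁻¹) (2 * c) * (1 + ‖u‖) := by ring

theorem CompositionCoeffBound.eq_zero_of_two_le (hS : CompositionCoeffBound b q C c)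
    (hpq : p.HolderConjugate q) (hc : 0 ≤ c) {k : ℕ} (hk : 2 ≤ k) : b k = 0 :=
  have ⟨_, hK⟩ := hS.exists_norm_tsum_mul_pow_le_linear hpq hc
  eq_zero_of_norm_tsum_le_linear (hS.summable_norm_mul_pow hpq hc) hK hk

end CompositionCoeffBound

/-- Positive compositions are the weak compositions on which `Function.update a 0 0` does not
vanish. -/
lemma tsum_pnat_eq_compositionCoeff (a : ℕ → ℂ) (m n : ℕ) :
    (∑' k : Fin m → ℕ+, if ∑ i, (k i : ℕ) = n then ∏ i, a (k i) else 0) =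
      compositionCoeff (Function.update a 0 0) m n := by
  set f : (Fin m → ℕ) → ℂ := fun g =>
    if ∑ i, g i = n then ∏ i, Function.update a 0 0 (g i) else 0
  have hinj : Function.Injective fun (k : Fin m → ℕ+) i => (k i : ℕ) :=
    fun k k' h => funext fun i => PNat.coe_injective (congrFun h i)
  have hsupp : Function.support f ⊆ Set.range fun (k : Fin m → ℕ+) i => (k i : ℕ) := by
    intro g hg
    refine ⟨fun i => ⟨g i, Nat.pos_of_ne_zero fun h0 => hg ?_⟩, rfl⟩
    simp only [f]
    split_ifs
    · exact prod_eq_zero (mem_univ i) (by simp [h0])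
    · rfl
  calc (∑' k : Fin m → ℕ+, if ∑ i, (k i : ℕ) = n then ∏ i, a (k i) else 0)
      = ∑' k : Fin m → ℕ+, f fun i => (k i : ℕ) := by
        refine tsum_congr fun k => ?_
        simp only [f, Function.update_of_ne (k _).ne_zero]
    _ = ∑' g, f g := hinj.tsum_eq hsupp
    _ = compositionCoeff (Function.update a 0 0) m n := by
        rw [tsum_eq_sum (s := Nat.antidiagonalTuple m n) fun g hg => by
          simp [f, Nat.mem_antidiagonalTuple.not.1 hg]]
        exact sum_congr rfl fun g hg => if_pos (Nat.mem_antidiagonalTuple.1 hg)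

lemma eq_sum_compositionCoeff_mul_pow {a : ℕ → ℂ} {P : ℕ → ℂ → ℂ} (hP0 : ∀ z, P 0 z = 1)
    (hP : ∀ n : ℕ, 1 ≤ n → ∀ z : ℂ, P n z = (n.factorial : ℂ) *
      ∑ m ∈ Icc 1 n, z ^ m / (m.factorial : ℂ) *
        ∑' k : Fin m → ℕ+, (if ∑ i, (k i : ℕ) = n then ∏ i, a (k i) else 0))
    (n : ℕ) (z : ℂ) :
    P n z = ∑ m ∈ range (n + 1),
      (n.factorial / m.factorial * compositionCoeff (Function.update a 0 0) m n : ℂ) * z ^ m := by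
  rcases Nat.eq_zero_or_pos n with rfl | hn
  · simp [hP0, compositionCoeff_zero_left]
  rw [hP n hn, sum_range_eq_add_Ico _ (by omega : 0 < n + 1), Ico_add_one_right_eq_Icc, mul_sum,
    compositionCoeff_zero_left, if_neg hn.ne', mul_zero, zero_mul, zero_add]
  refine sum_congr rfl fun m _ => ?_
  rw [tsum_pnat_eq_compositionCoeff]
  ring

/-- Continuity of the umbral operator `∑ φ_n z^n ↦ ∑ φ_n P_n` from the weights
`(n!)^{1/α} 2^{ln}` to the weights `(m!)^{1/α}`, tested on finitely supported sequences. -/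
def UmbralEstimate (P : ℕ → ℂ → ℂ) (α : ℝ) (l : ℕ) (C : ℝ) : Prop :=
  ∀ φ ψ : ℕ → ℂ, (∃ N : ℕ, ∀ n : ℕ, N ≤ n → φ n = 0) → (∃ N : ℕ, ∀ m : ℕ, N ≤ m → ψ m = 0) →
    (∀ z : ℂ, ∑' n : ℕ, φ n * P n z = ∑' m : ℕ, ψ m * z ^ m) →
    ∑' m : ℕ, (m.factorial : ℝ) ^ (1 / α) * ‖ψ m‖ ≤
      C * ∑' n : ℕ, (n.factorial : ℝ) ^ (1 / α) * 2 ^ (l * n) * ‖φ n‖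

lemma UmbralEstimate.compositionCoeffBound {b : ℕ → ℂ} (hb : b 0 = 0) {P : ℕ → ℂ → ℂ}
    (hP : ∀ n z, P n z = ∑ m ∈ range (n + 1),
      (n.factorial / m.factorial * compositionCoeff b m n : ℂ) * z ^ m)
    {α q C : ℝ} {l : ℕ} (H : UmbralEstimate P α l C) (hαq : α.HolderConjugate q) :
    CompositionCoeffBound b q C (2 ^ l) := by
  intro m n
  set ψ : ℕ → ℂ := fun m => n.factorial / m.factorial * compositionCoeff b m n
  have hψ : ∀ m ∉ range (n + 1), ψ m = 0 := fun m hm => by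
    simp [ψ, compositionCoeff_eq_zero_of_lt hb (by simpa using hm : n < m)]
  have hest := H (Pi.single n 1) ψ ⟨n + 1, fun j hj => by simp [Pi.single_apply]; omega⟩
    ⟨n + 1, fun j hj => hψ j (by simpa using hj)⟩ fun z => by
      rw [tsum_eq_single n fun j hj => by simp [hj],
        tsum_eq_sum (s := range (n + 1)) fun j hj => by simp [hψ j hj], hP]
      simp [ψ]
  have hφ : ∑' j : ℕ, (j.factorial : ℝ) ^ (1 / α) * 2 ^ (l * j) * ‖(Pi.single n 1 : ℕ → ℂ) j‖ =
      (n.factorial : ℝ) ^ (1 / α) * 2 ^ (l * n) := by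
    rw [tsum_eq_single n fun j hj => by simp [hj]]
    simp
  rw [hφ] at hest
  have hm := ((summable_of_ne_finset_zero (s := range (n + 1)) fun j hj => by
    simp [hψ j hj]).le_tsum m fun j _ => by positivity).trans hest
  simp only [ψ, norm_mul, norm_div, Complex.norm_natCast, one_div] at hm
  rw [← pow_mul]
  exact le_mul_rpow_div_rpow_of_holderConjugate hαq (mod_cast m.factorial_pos)
    (mod_cast n.factorial_pos) (hm.trans_eq (by ring))

end BinomialType

/-- Proposition 3.6(ii): for `α > 1`, the umbral operator of a sequence of
polynomials of binomial type cannot be bounded between the weighted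
ℓ¹-coefficient norms of exponent `α` unless the sequence is `(z^n)`. -/
theorem umbral_not_bounded_above_order_one
    (α : ℝ) (hα : 1 < α) (a : ℕ → ℂ) (ha1 : a 1 = 1)
    (p : ℕ → ℂ → ℂ) (hp0 : ∀ z : ℂ, p 0 z = 1)
    (hp : ∀ n : ℕ, 1 ≤ n → ∀ z : ℂ, p n z = (n.factorial : ℂ) *
      ∑ m ∈ Finset.Icc 1 n, z ^ m / (m.factorial : ℂ) *
        ∑' k : Fin m → ℕ+,
          (if (∑ i, (k i : ℕ)) = n then ∏ i, a (k i) else 0))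
    (hbdd : ∃ (l : ℕ) (C : ℝ), 0 < C ∧ ∀ φ ψ : ℕ → ℂ,
      (∃ N : ℕ, ∀ n : ℕ, N ≤ n → φ n = 0) →
      (∃ N : ℕ, ∀ m : ℕ, N ≤ m → ψ m = 0) →
      (∀ z : ℂ, ∑' n : ℕ, φ n * p n z = ∑' m : ℕ, ψ m * z ^ m) →
      ∑' m : ℕ, (m.factorial : ℝ) ^ (1 / α) * ‖ψ m‖ ≤
        C * ∑' n : ℕ, (n.factorial : ℝ) ^ (1 / α) * 2 ^ (l * n) * ‖φ n‖) :
    (∀ k : ℕ, 2 ≤ k → a k = 0) ∧ ∀ (n : ℕ) (z : ℂ), p n z = z ^ n := by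
  open BinomialType in
  obtain ⟨l, C, -, H⟩ := hbdd
  have hpoly := eq_sum_compositionCoeff_mul_pow hp0 hp
  have hαq := Real.HolderConjugate.conjExponent hα
  have hbound := UmbralEstimate.compositionCoeffBound (Function.update_self 0 0 a) hpoly H hαq
  have hak : ∀ k, 2 ≤ k → a k = 0 := fun k hk => by
    simpa [Function.update_of_ne (by omega : k ≠ 0)] using
      hbound.eq_zero_of_two_le hαq (by positivity) hk
  refine ⟨hak, fun n z => ?_⟩
  have hb : Function.update a 0 0 = fun t => if t = 1 then 1 else 0 := funext fun t => by
    rcases t with _ | _ | t <;> simp [ha1, hak]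
  simp [hpoly, hb, compositionCoeff_indicator_one, n.factorial_ne_zero]
end

section
/- Let α > 1, and for s ∈ [0,∞) define φ(s) := Σ_{n=0}^∞ (n!)^{1/α − 1} · s^n. Then: (a) the series converges for every s ≥ 0 and φ is strictly increasing on [0,∞); and (b) for every A ≥ 1 and B ≥ 1 there exists D > 0 such that A · φ(B·s) ≤ φ(D·s) for all s ≥ 1. -/
/-! The coefficients `c n = (n!)^β`, `β = 1/α - 1 ∈ (-1, 0)`, satisfy
`c (n+1) / c n = (n+1)^β → 0`, which gives convergence everywhere, and `c n ≤ (n+1) c (n+1)`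
because `β ≥ -1`. The latter lets the series at `x` be dominated termwise by its own shift at
`2Ax`: `A c n x^n ≤ c (n+1) (2Ax)^(n+1)` for `A, x ≥ 1`, since `(n+1) A ≤ (2A)^(n+1)`.
Hence `A φ(Bs) ≤ φ(2ABs)`. -/

open Filter Topology Set

section PowerSeries

variable {c : ℕ → ℝ}

theorem summable_mul_pow_of_tendsto_ratio_zero (hc : ∀ n, 0 < c n)
    (hratio : Tendsto (fun n => c (n + 1) / c n) atTop (𝓝 0)) (x : ℝ) :
    Summable fun n => c n * x ^ n := by
  refine summable_of_ratio_norm_eventually_le (r := 1 / 2) (by norm_num) ?_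
  have hsmall : ∀ᶠ n in atTop, c (n + 1) / c n * |x| ≤ 1 / 2 := by
    have hlim := hratio.mul_const |x|
    rw [zero_mul] at hlim
    exact hlim.eventually (eventually_le_nhds (by norm_num))
  filter_upwards [hsmall] with n hn
  have hterm : ‖c (n + 1) * x ^ (n + 1)‖ = c (n + 1) / c n * |x| * ‖c n * x ^ n‖ := by
    rw [norm_mul, norm_mul, norm_pow, norm_pow, Real.norm_of_nonneg (hc _).le,
      Real.norm_of_nonneg (hc _).le, Real.norm_eq_abs, pow_succ]
    field_simp [(hc n).ne']
  rw [hterm]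
  exact mul_le_mul_of_nonneg_right hn (norm_nonneg _)

variable (hc0 : ∀ n, 0 ≤ c n) (hsum : ∀ x, 0 ≤ x → Summable fun n => c n * x ^ n)
include hc0 hsum

theorem strictMonoOn_tsum_mul_pow (hc1 : 0 < c 1) :
    StrictMonoOn (fun x => ∑' n, c n * x ^ n) (Ici 0) := by
  intro x hx y hy hxy
  refine (hsum x hx).tsum_lt_tsum (i := 1) (fun n => ?_) ?_ (hsum y hy)
  · exact mul_le_mul_of_nonneg_left (pow_le_pow_left₀ hx hxy.le n) (hc0 n)
  · simpa using mul_lt_mul_of_pos_left hxy hc1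

theorem mul_tsum_mul_pow_le_tsum_mul_pow_two_mul (hc : ∀ n, c n ≤ (n + 1) * c (n + 1))
    {A x : ℝ} (hA : 1 ≤ A) (hx : 1 ≤ x) :
    A * ∑' n, c n * x ^ n ≤ ∑' n, c n * (2 * A * x) ^ n := by
  have hy : 0 ≤ 2 * A * x := by positivity
  have hshift : ∀ n, A * (c n * x ^ n) ≤ c (n + 1) * (2 * A * x) ^ (n + 1) := fun n =>
    calc A * (c n * x ^ n) ≤ A * ((n + 1) * c (n + 1) * x ^ n) := by gcongr; exact hc n
      _ = c (n + 1) * ((n + 1) * A * x ^ n) := by ring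
      _ ≤ c (n + 1) * (2 ^ (n + 1) * A ^ (n + 1) * x ^ (n + 1)) := by
        gcongr
        · exact hc0 _
        · exact_mod_cast (n + 1).lt_two_pow_self.le
        · exact le_self_pow₀ hA n.succ_ne_zero
        · omega
      _ = c (n + 1) * (2 * A * x) ^ (n + 1) := by ring
  calc A * ∑' n, c n * x ^ n = ∑' n, A * (c n * x ^ n) := tsum_mul_left.symm
    _ ≤ ∑' n, c (n + 1) * (2 * A * x) ^ (n + 1) :=
      Summable.tsum_le_tsum hshift ((hsum x (by linarith)).mul_left A)
        ((hsum _ hy).comp_injective Nat.succ_injective)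
    _ ≤ ∑' n, c n * (2 * A * x) ^ n :=
      tsum_comp_le_tsum_of_inj (hsum _ hy) (fun n => mul_nonneg (hc0 n) (pow_nonneg hy n))
        Nat.succ_injective

end PowerSeries

section FactorialRpow

variable {β : ℝ}

theorem factorial_succ_rpow (n : ℕ) :
    ((n + 1).factorial : ℝ) ^ β = ((n : ℝ) + 1) ^ β * (n.factorial : ℝ) ^ β := by
  rw [Nat.factorial_succ, Nat.cast_mul, Real.mul_rpow (by positivity) (by positivity)]
  push_cast
  rfl

theorem tendsto_factorial_rpow_ratio (hβ : β < 0) :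
    Tendsto (fun n : ℕ => ((n + 1).factorial : ℝ) ^ β / (n.factorial : ℝ) ^ β) atTop (𝓝 0) := by
  have hpow : Tendsto (fun x : ℝ => x ^ β) atTop (𝓝 0) := by
    simpa using tendsto_rpow_neg_atTop (y := -β) (by linarith)
  have hsucc : Tendsto (fun n : ℕ => (n : ℝ) + 1) atTop atTop :=
    tendsto_natCast_atTop_atTop.atTop_add tendsto_const_nhds
  refine (hpow.comp hsucc).congr fun n => ?_
  rw [factorial_succ_rpow, mul_div_cancel_right₀ _ (by positivity)]
  rfl

theorem factorial_rpow_le_mul_factorial_succ_rpow (hβ : -1 ≤ β) (n : ℕ) :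
    (n.factorial : ℝ) ^ β ≤ (n + 1) * ((n + 1).factorial : ℝ) ^ β := by
  have hn : (1 : ℝ) ≤ n + 1 := by linarith [n.cast_nonneg (α := ℝ)]
  calc (n.factorial : ℝ) ^ β = ((n : ℝ) + 1) ^ (0 : ℝ) * (n.factorial : ℝ) ^ β := by simp
    _ ≤ ((n : ℝ) + 1) ^ (1 + β) * (n.factorial : ℝ) ^ β := by
      gcongr
      linarith
    _ = (n + 1) * ((n + 1).factorial : ℝ) ^ β := by
      rw [factorial_succ_rpow, Real.rpow_add (by positivity), Real.rpow_one, mul_assoc]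

end FactorialRpow

/-- Auxiliary comparison inequality used in the proof of Proposition 3.6(ii):
properties of `φ(s) = Σ (n!)^{1/α−1} s^n` for `α > 1`. -/
theorem phi_comparison
    (α : ℝ) (hα : 1 < α) (φ : ℝ → ℝ)
    (hφ : ∀ s : ℝ, φ s = ∑' n : ℕ, (n.factorial : ℝ) ^ (1 / α - 1) * s ^ n) :
    (∀ s : ℝ, 0 ≤ s → Summable fun n : ℕ => (n.factorial : ℝ) ^ (1 / α - 1) * s ^ n) ∧
    StrictMonoOn φ (Set.Ici 0) ∧
    ∀ A B : ℝ, 1 ≤ A → 1 ≤ B → ∃ D : ℝ, 0 < D ∧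
      ∀ s : ℝ, 1 ≤ s → A * φ (B * s) ≤ φ (D * s) := by
  obtain rfl : φ = _ := funext hφ
  have hinv : 0 < 1 / α ∧ 1 / α < 1 := ⟨by positivity, (div_lt_one (by linarith)).2 hα⟩
  have hc0 : ∀ n : ℕ, 0 ≤ (n.factorial : ℝ) ^ (1 / α - 1) := fun n => by positivity
  have hsum : ∀ s : ℝ, 0 ≤ s → Summable fun n : ℕ => (n.factorial : ℝ) ^ (1 / α - 1) * s ^ n :=
    fun s _ => summable_mul_pow_of_tendsto_ratio_zero (fun n => by positivity)
      (tendsto_factorial_rpow_ratio (by linarith)) s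
  refine ⟨hsum, strictMonoOn_tsum_mul_pow hc0 hsum (by simp), fun A B hA hB => ?_⟩
  refine ⟨2 * A * B, by positivity, fun s hs => ?_⟩
  rw [mul_assoc (2 * A)]
  exact mul_tsum_mul_pow_le_tsum_mul_pow_two_mul hc0 hsum
    (factorial_rpow_le_mul_factorial_succ_rpow (by linarith)) hA
    (one_le_mul_of_one_le_of_one_le hB hs)
end

section
/- Let α ∈ (0,1] and let (z)_n := z·(z−1)·(z−2)⋯(z−n+1) denote the falling factorial polynomial of degree n (with (z)_0 := 1). Then every entire function f : ℂ → ℂ satisfying sup_{z∈ℂ}|f(z)|·exp(−t|z|^α) < ∞ for all t > 0 admits a unique sequence (c_n)_{n≥0} of complex numbers such that for every t > 0, sup_{z∈ℂ} |f(z) − Σ_{n=0}^N c_n·(z)_n| · exp(−t·|z|^α) → 0 as N → ∞. -/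
/-!
Write `f = ∑ aₖ zᵏ` and expand every power in falling factorials, `zᵏ = ∑ₙ S(k, n) (z)ₙ` with
Stirling numbers of the second kind; the candidate coefficients are `cₙ = ∑ₖ aₖ S(k, n)`.
Since `|(z)ₙ| ≤ (|z| + k)ₙ` for `n ≤ k + 1`, the `k`-th term of the remainder
`f(z) - ∑_{n ≤ N} cₙ (z)ₙ` vanishes for `k ≤ N` and is at most `2 |aₖ| (|z| + k)ᵏ` otherwise.
Cauchy's estimate for the growth `|f(z)| ≤ C exp (s |z|^α)`, taken at radius `4 |z|` when
`k ≤ |z|` and at radius `(k / s)^{1/α}` when `|z| < k`, gives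
`|aₖ| (|z| + k)ᵏ ≤ C exp (t |z|^α) 2⁻ᵏ` once `s` is small compared with `t`; the second case
uses `k ≤ k^{1/α}`, i.e. `α ≤ 1`. So the weighted remainder is bounded by a tail of a convergent
series, uniformly in `z`.

For uniqueness, `(m)ₙ = 0` for `n > m` and `(m)ₘ = m! ≠ 0`: the values of the sum at
`z = 0, 1, 2, …` determine the coefficients one at a time.
-/

open Finset Polynomial Filter Topology Real
open scoped Nat

theorem pow_eq_sum_stirlingSecond_mul_descPochhammer_eval {R : Type*} [CommRing R] (x : R)
    {k N : ℕ} (hk : k ≤ N) :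
    x ^ k = ∑ n ∈ range (N + 1), (k.stirlingSecond n : R) * (descPochhammer R n).eval x := by
  induction k with
  | zero => simp [sum_range_succ', Nat.stirlingSecond]
  | succ k ih =>
    obtain ⟨M, rfl⟩ : ∃ M, N = M + 1 := ⟨N - 1, by omega⟩
    set P : ℕ → R := fun n => (descPochhammer R n).eval x
    set S : ℕ → R := fun n => (k.stirlingSecond n : R)
    have hS : S (M + 1) = 0 := by simp [S, Nat.stirlingSecond_eq_zero_of_lt (by omega : k < M + 1)]
    have hxP (n : ℕ) : P n * x = P (n + 1) + n * P n := by
      simp only [P, descPochhammer_succ_eval]; ring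
    calc x ^ (k + 1)
        = ∑ n ∈ range (M + 2), S n * P (n + 1) + ∑ n ∈ range (M + 2), S n * (n * P n) := by
          rw [pow_succ, ih (by omega), sum_mul, ← sum_add_distrib]
          exact sum_congr rfl fun n _ => by rw [mul_assoc, hxP]; ring
      _ = ∑ n ∈ range (M + 1), (S n + (n + 1) * S (n + 1)) * P (n + 1) := by
          rw [sum_range_succ _ (M + 1), sum_range_succ' (fun n => S n * (n * P n)), hS]
          simp only [zero_mul, add_zero, Nat.cast_zero, mul_zero, ← sum_add_distrib]
          exact sum_congr rfl fun n _ => by push_cast; ring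
      _ = _ := by
          rw [sum_range_succ' _ (M + 1)]
          simp only [S, Nat.stirlingSecond_succ_succ, Nat.stirlingSecond_succ_zero, Nat.cast_add,
            Nat.cast_mul, Nat.cast_one, Nat.cast_zero, descPochhammer_zero, eval_one, mul_one,
            add_zero]
          exact sum_congr rfl fun n _ => by ring

theorem stirlingSecond_le_pow_self (k n : ℕ) : k.stirlingSecond n ≤ k ^ k := by
  rcases lt_or_ge k n with hkn | hnk
  · simp [Nat.stirlingSecond_eq_zero_of_lt hkn]
  have hk : k ^ k = ∑ i ∈ range (k + 1), k.stirlingSecond i * k.descFactorial i := by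
    have := pow_eq_sum_stirlingSecond_mul_descPochhammer_eval (k : ℤ) (le_refl k)
    simp only [descPochhammer_eval_eq_descFactorial] at this
    exact_mod_cast this
  calc k.stirlingSecond n ≤ k.stirlingSecond n * k.descFactorial n :=
        Nat.le_mul_of_pos_right _ (Nat.descFactorial_pos.2 hnk)
    _ ≤ k ^ k := by
        rw [hk]
        exact single_le_sum (f := fun i => k.stirlingSecond i * k.descFactorial i)
          (fun i _ => Nat.zero_le _) (mem_range.2 (by omega))

theorem sum_mul_descPochhammer_eval_natCast_of_le {R : Type*} [CommRing R] (c : ℕ → R)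
    {m N : ℕ} (hmN : m ≤ N) :
    ∑ n ∈ range (N + 1), c n * (descPochhammer R n).eval (m : R)
      = ∑ n ∈ range (m + 1), c n * (descPochhammer R n).eval (m : R) := by
  refine (sum_subset (range_subset_range.2 (by omega)) fun n _ hn => ?_).symm
  rw [descPochhammer_eval_coe_nat_of_lt (by simpa using hn), mul_zero]

theorem eq_of_forall_sum_mul_descPochhammer_eval_natCast_eq {R : Type*} [CommRing R] [IsDomain R]
    [CharZero R] {c c' : ℕ → R}
    (h : ∀ m : ℕ, ∑ n ∈ range (m + 1), c n * (descPochhammer R n).eval (m : R)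
      = ∑ n ∈ range (m + 1), c' n * (descPochhammer R n).eval (m : R)) :
    c = c' := by
  funext m
  induction m using Nat.strong_induction_on with
  | _ m ih =>
    have hm := h m
    rw [sum_range_succ, sum_range_succ, sum_congr rfl fun n hn => by rw [ih n (mem_range.1 hn)],
      add_right_inj] at hm
    refine mul_right_cancel₀ ?_ hm
    rw [descPochhammer_eval_eq_descFactorial, Nat.cast_ne_zero]
    exact (Nat.descFactorial_pos.2 le_rfl).ne'

section NormedField

variable {𝕜 : Type*} [NormedField 𝕜]

theorem norm_natCast_le (n : ℕ) : ‖(n : 𝕜)‖ ≤ n := by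
  simpa using Nat.norm_cast_le (α := 𝕜) n

theorem norm_descPochhammer_eval_le_ascPochhammer_eval (n : ℕ) (z : 𝕜) :
    ‖(descPochhammer 𝕜 n).eval z‖ ≤ (ascPochhammer ℝ n).eval ‖z‖ := by
  induction n with
  | zero => simp
  | succ n ih =>
    rw [descPochhammer_succ_eval, ascPochhammer_succ_eval, norm_mul]
    refine mul_le_mul ih ?_ (norm_nonneg _) ((norm_nonneg _).trans ih)
    calc ‖z - n‖ ≤ ‖z‖ + ‖(n : 𝕜)‖ := norm_sub_le _ _
      _ ≤ ‖z‖ + n := by gcongr; exact norm_natCast_le n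

theorem norm_descPochhammer_eval_le {n k : ℕ} (hn : n ≤ k + 1) (z : 𝕜) :
    ‖(descPochhammer 𝕜 n).eval z‖ ≤ (descPochhammer ℝ n).eval (‖z‖ + k) := by
  have hn' : (n : ℝ) ≤ k + 1 := by exact_mod_cast hn
  have hz := norm_nonneg z
  calc ‖(descPochhammer 𝕜 n).eval z‖ ≤ (ascPochhammer ℝ n).eval ‖z‖ :=
        norm_descPochhammer_eval_le_ascPochhammer_eval n z
    _ = (descPochhammer ℝ n).eval (‖z‖ + n - 1) := by
        rw [descPochhammer_eval_eq_ascPochhammer]; ring_nf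
    _ ≤ (descPochhammer ℝ n).eval (‖z‖ + k) :=
        monotoneOn_descPochhammer_eval n (by simp) (by simp only [Set.mem_Ici]; linarith) (by linarith)

theorem sum_stirlingSecond_mul_norm_descPochhammer_eval_le (k N : ℕ) (z : 𝕜) :
    ∑ n ∈ range (N + 1), (k.stirlingSecond n : ℝ) * ‖(descPochhammer 𝕜 n).eval z‖
      ≤ (‖z‖ + k) ^ k := by
  have hterm (n : ℕ) : (k.stirlingSecond n : ℝ) * ‖(descPochhammer 𝕜 n).eval z‖
      ≤ k.stirlingSecond n * (descPochhammer ℝ n).eval (‖z‖ + k) := by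
    rcases lt_or_ge k n with hkn | hnk
    · simp [Nat.stirlingSecond_eq_zero_of_lt hkn]
    · exact mul_le_mul_of_nonneg_left (norm_descPochhammer_eval_le (by omega) z) (by positivity)
  have hnonneg (n : ℕ) : 0 ≤ (k.stirlingSecond n : ℝ) * ‖(descPochhammer 𝕜 n).eval z‖ := by
    positivity
  calc _ ≤ ∑ n ∈ range (max N k + 1), (k.stirlingSecond n : ℝ) * ‖(descPochhammer 𝕜 n).eval z‖ :=
        sum_le_sum_of_subset_of_nonneg (range_subset_range.2 (by omega)) fun n _ _ => hnonneg n
    _ ≤ ∑ n ∈ range (max N k + 1), (k.stirlingSecond n : ℝ) * (descPochhammer ℝ n).eval (‖z‖ + k) :=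
        sum_le_sum fun n _ => hterm n
    _ = (‖z‖ + k) ^ k :=
        (pow_eq_sum_stirlingSecond_mul_descPochhammer_eval _ (le_max_right N k)).symm

theorem summable_mul_stirlingSecond [CompleteSpace 𝕜] {a : ℕ → 𝕜} {b : ℕ → ℝ} (hb : Summable b)
    (hab : ∀ k, ‖a k‖ * (k : ℝ) ^ k ≤ b k) (n : ℕ) :
    Summable fun k => a k * (k.stirlingSecond n : 𝕜) := by
  refine hb.of_norm_bounded fun k => ?_
  calc ‖a k * (k.stirlingSecond n : 𝕜)‖ ≤ ‖a k‖ * k.stirlingSecond n := by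
        rw [norm_mul]; gcongr; exact norm_natCast_le _
    _ ≤ ‖a k‖ * (k : ℝ) ^ k := by gcongr; exact_mod_cast stirlingSecond_le_pow_self k n
    _ ≤ b k := hab k

/-- The coefficients of `∑ₖ aₖ zᵏ` in the basis of falling factorials. -/
noncomputable def newtonCoeff (a : ℕ → 𝕜) (n : ℕ) : 𝕜 :=
  ∑' k, a k * (k.stirlingSecond n : 𝕜)

theorem norm_sub_sum_newtonCoeff_mul_le [CompleteSpace 𝕜] {a : ℕ → 𝕜} {z w : 𝕜} {b : ℕ → ℝ}
    (hw : HasSum (fun k => a k * z ^ k) w) (hb : Summable b)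
    (hab : ∀ k, ‖a k‖ * (‖z‖ + k) ^ k ≤ b k) (N : ℕ) :
    ‖w - ∑ n ∈ range (N + 1), newtonCoeff a n * (descPochhammer 𝕜 n).eval z‖
      ≤ 2 * ∑' k, b (k + (N + 1)) := by
  -- the `k`-th term of the remainder series
  set u : ℕ → 𝕜 := fun k => a k *
    (z ^ k - ∑ n ∈ range (N + 1), (k.stirlingSecond n : 𝕜) * (descPochhammer 𝕜 n).eval z)
  have hsummable := summable_mul_stirlingSecond hb fun k =>
    (mul_le_mul_of_nonneg_left (pow_le_pow_left₀ k.cast_nonneg (by simp) k)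
      (norm_nonneg _)).trans (hab k)
  have hu : HasSum u (w - ∑ n ∈ range (N + 1), newtonCoeff a n * (descPochhammer 𝕜 n).eval z) := by
    have h := hw.sub (hasSum_sum (s := range (N + 1)) fun n _ =>
      (hsummable n).hasSum.mul_right ((descPochhammer 𝕜 n).eval z))
    simp only [mul_assoc, ← mul_sum, ← mul_sub] at h
    exact h
  have hu_head : ∑ k ∈ range (N + 1), u k = 0 :=
    sum_eq_zero fun k hk => by
      simp only [u]
      rw [← pow_eq_sum_stirlingSecond_mul_descPochhammer_eval z (mem_range_succ_iff.1 hk), sub_self,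
        mul_zero]
  have hu_le (k : ℕ) : ‖u k‖ ≤ 2 * b k := by
    have hz : ‖z‖ ^ k ≤ (‖z‖ + k) ^ k := pow_le_pow_left₀ (norm_nonneg z) (by simp) k
    have hexpansion : ‖∑ n ∈ range (N + 1), (k.stirlingSecond n : 𝕜) * (descPochhammer 𝕜 n).eval z‖
        ≤ (‖z‖ + k) ^ k := by
      refine (norm_sum_le _ _).trans ((sum_le_sum fun n _ => ?_).trans
        (sum_stirlingSecond_mul_norm_descPochhammer_eval_le k N z))
      rw [norm_mul]
      gcongr
      exact norm_natCast_le _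
    calc ‖u k‖ ≤ ‖a k‖ * (‖z‖ ^ k + (‖z‖ + k) ^ k) := by
          rw [norm_mul]
          gcongr
          exact (norm_sub_le _ _).trans (add_le_add (norm_pow _ _).le hexpansion)
      _ ≤ 2 * b k := by nlinarith [hab k, norm_nonneg (a k)]
  rw [← hasSum_nat_add_iff' (N + 1), hu_head, sub_zero] at hu
  exact hu.norm_le_of_bounded (((summable_nat_add_iff (N + 1)).2 hb).hasSum.mul_left 2)
    fun k => hu_le _

theorem exists_forall_norm_sub_sum_newtonCoeff_mul_le [CompleteSpace 𝕜] {a : ℕ → 𝕜}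
    {f : 𝕜 → 𝕜} {w : 𝕜 → ℝ} {β : ℕ → ℝ} (hf : ∀ z, HasSum (fun k => a k * z ^ k) (f z))
    (hw : ∀ z, 0 < w z) (hβ : Summable β) (haβ : ∀ k z, ‖a k‖ * (‖z‖ + k) ^ k * w z ≤ β k)
    {ε : ℝ} (hε : 0 < ε) :
    ∃ N₀ : ℕ, ∀ N : ℕ, N₀ ≤ N → ∀ z : 𝕜,
      ‖f z - ∑ n ∈ range (N + 1), newtonCoeff a n * (descPochhammer 𝕜 n).eval z‖ * w z ≤ ε := by
  have htail : Tendsto (fun N => 2 * ∑' k, β (k + (N + 1))) atTop (𝓝 0) := by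
    simpa using ((tendsto_sum_nat_add β).comp (tendsto_add_atTop_nat 1)).const_mul 2
  obtain ⟨N₀, hN₀⟩ := eventually_atTop.1 (htail.eventually (ge_mem_nhds hε))
  refine ⟨N₀, fun N hN z => ?_⟩
  have hrem := norm_sub_sum_newtonCoeff_mul_le (hf z) (hβ.div_const (w z))
    (fun k => (le_div_iff₀ (hw z)).2 (haβ k z)) N
  rw [tsum_div_const, ← mul_div_assoc, le_div_iff₀ (hw z)] at hrem
  exact hrem.trans (hN₀ N hN)

theorem apply_natCast_eq_sum_of_forall_norm_sub_mul_le {f : 𝕜 → 𝕜} {c : ℕ → 𝕜} {w : 𝕜 → ℝ}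
    {m : ℕ} (hw : 0 < w m)
    (h : ∀ ε : ℝ, 0 < ε → ∃ N₀ : ℕ, ∀ N : ℕ, N₀ ≤ N → ∀ z : 𝕜,
      ‖f z - ∑ n ∈ range (N + 1), c n * (descPochhammer 𝕜 n).eval z‖ * w z ≤ ε) :
    f m = ∑ n ∈ range (m + 1), c n * (descPochhammer 𝕜 n).eval (m : 𝕜) := by
  rw [← sub_eq_zero, ← norm_le_zero_iff]
  refine le_of_mul_le_mul_right ?_ hw
  rw [zero_mul]
  refine le_of_forall_gt_imp_ge_of_dense fun ε hε => ?_
  obtain ⟨N₀, hN₀⟩ := h ε hε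
  simpa [sum_mul_descPochhammer_eval_natCast_of_le c (le_max_right N₀ m)]
    using hN₀ (max N₀ m) (le_max_left N₀ m) m

end NormedField

section CoefficientBounds

variable {α s C A : ℝ} {k : ℕ}

theorem mul_add_pow_mul_exp_le_of_le {t r : ℝ} (hC : 0 ≤ C) (hA : 0 ≤ A)
    (hst : s * 4 ^ α ≤ t) (hcauchy : ∀ R, 0 ≤ R → A * R ^ k ≤ C * exp (s * R ^ α))
    (hr : 0 ≤ r) (hkr : k ≤ r) :
    A * (r + k) ^ k * exp (-t * r ^ α) ≤ C * (1 / 2) ^ k := by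
  have hpow : (r + k) ^ k ≤ (4 * r) ^ k * (1 / 2) ^ k := by
    rw [← mul_pow]
    exact pow_le_pow_left₀ (by positivity) (by linarith) k
  have hexp : exp (s * (4 * r) ^ α) ≤ exp (t * r ^ α) := by
    rw [exp_le_exp, mul_rpow (by norm_num) hr, ← mul_assoc]
    exact mul_le_mul_of_nonneg_right hst (by positivity)
  have hcauchy4r : A * (4 * r) ^ k ≤ C * exp (t * r ^ α) :=
    (hcauchy _ (by positivity)).trans (mul_le_mul_of_nonneg_left hexp hC)
  calc A * (r + k) ^ k * exp (-t * r ^ α)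
      ≤ A * ((4 * r) ^ k * (1 / 2) ^ k) * exp (-t * r ^ α) := by gcongr
    _ = A * (4 * r) ^ k * exp (-t * r ^ α) * (1 / 2) ^ k := by ring
    _ ≤ C * exp (t * r ^ α) * exp (-t * r ^ α) * (1 / 2) ^ k := by gcongr
    _ = C * (1 / 2) ^ k := by
        rw [mul_assoc C, ← exp_add]
        simp

theorem mul_two_mul_pow_le (hα : 0 < α) (hα1 : α ≤ 1) (hs : 0 < s)
    (hs4 : 4 * exp 1 * s ^ α⁻¹ ≤ 1) (hA : 0 ≤ A)
    (hcauchy : ∀ R, 0 ≤ R → A * R ^ k ≤ C * exp (s * R ^ α)) (hk : k ≠ 0) :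
    A * (2 * k) ^ k ≤ C * (1 / 2) ^ k := by
  -- up to the factor `α`, the radius minimising `exp (s R^α) / R^k`
  obtain ⟨R, hR⟩ : ∃ R, R = ((k : ℝ) / s) ^ α⁻¹ := ⟨_, rfl⟩
  have hk1 : (1 : ℝ) ≤ k := by exact_mod_cast Nat.one_le_iff_ne_zero.2 hk
  have hRk : 2 * k ≤ R * (2 * exp 1)⁻¹ := by
    have hself : (k : ℝ) ≤ k ^ α⁻¹ := Real.self_le_rpow_of_one_le hk1 ((one_le_inv₀ hα).2 hα1)
    rw [hR, div_rpow (by positivity) hs.le, le_mul_inv_iff₀ (by positivity),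
      le_div_iff₀ (by positivity)]
    calc 2 * k * (2 * exp 1) * s ^ α⁻¹ = k * (4 * exp 1 * s ^ α⁻¹) := by ring
      _ ≤ k ^ α⁻¹ * 1 := by gcongr
      _ = k ^ α⁻¹ := mul_one _
  have hcR : A * R ^ k ≤ C * exp 1 ^ k := by
    have hRα : s * R ^ α = k := by
      rw [hR, rpow_inv_rpow (by positivity) hα.ne', mul_div_cancel₀ _ hs.ne']
    rw [← exp_nat_mul, mul_one, ← hRα]
    exact hcauchy R (by rw [hR]; positivity)
  calc A * (2 * k) ^ k ≤ A * (R * (2 * exp 1)⁻¹) ^ k := by gcongr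
    _ = A * R ^ k * ((2 * exp 1)⁻¹) ^ k := by ring
    _ ≤ C * exp 1 ^ k * ((2 * exp 1)⁻¹) ^ k := by gcongr
    _ = C * (1 / 2) ^ k := by
        rw [mul_assoc, ← mul_pow]
        congr 2
        field_simp

end CoefficientBounds

noncomputable def taylorCoeff (f : ℂ → ℂ) (k : ℕ) : ℂ :=
  (k ! : ℂ)⁻¹ * iteratedDeriv k f 0

theorem hasSum_taylorCoeff_mul_pow {f : ℂ → ℂ} (hf : Differentiable ℂ f) (z : ℂ) :
    HasSum (fun k => taylorCoeff f k * z ^ k) (f z) := by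
  simpa [taylorCoeff, mul_comm, mul_left_comm] using Complex.hasSum_taylorSeries_of_entire hf 0 z

theorem norm_taylorCoeff_mul_pow_le {f : ℂ → ℂ} (hf : Differentiable ℂ f) {R M : ℝ} (hR : 0 ≤ R)
    (hM : ∀ z : ℂ, ‖z‖ = R → ‖f z‖ ≤ M) (k : ℕ) :
    ‖taylorCoeff f k‖ * R ^ k ≤ M := by
  rcases hR.eq_or_lt with rfl | hR
  · have hf0 : ‖f 0‖ ≤ M := hM 0 (by simp)
    rcases eq_or_ne k 0 with rfl | hk
    · simpa [taylorCoeff] using hf0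
    · simpa [zero_pow hk] using (norm_nonneg _).trans hf0
  · have hcauchy := Complex.norm_iteratedDeriv_le_of_forall_mem_sphere_norm_le (c := 0) k hR
      hf.diffContOnCl fun z hz => hM z (by simpa using hz)
    rw [taylorCoeff, norm_mul, norm_inv, Complex.norm_natCast, ← le_div_iff₀ (by positivity),
      inv_mul_le_iff₀ (by positivity)]
    simpa [mul_div_assoc] using hcauchy

theorem exists_norm_le_mul_exp {f : ℂ → ℂ} {s α : ℝ}
    (hf : BddAbove (Set.range fun z : ℂ => ‖f z‖ * exp (-s * ‖z‖ ^ α))) :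
    ∃ C, 0 ≤ C ∧ ∀ z, ‖f z‖ ≤ C * exp (s * ‖z‖ ^ α) := by
  obtain ⟨C, hC⟩ := hf
  have hCz (z : ℂ) : ‖f z‖ * exp (-s * ‖z‖ ^ α) ≤ C := hC (Set.mem_range_self z)
  refine ⟨C, (by positivity : (0 : ℝ) ≤ _).trans (hCz 0), fun z => ?_⟩
  rw [← div_le_iff₀ (exp_pos _), div_eq_mul_inv, ← exp_neg, ← neg_mul]
  exact hCz z

theorem exists_summable_taylorCoeff_bound {α : ℝ} (hα : 0 < α) (hα1 : α ≤ 1) {f : ℂ → ℂ}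
    (hf : Differentiable ℂ f)
    (hmin : ∀ t : ℝ, 0 < t → BddAbove (Set.range fun z : ℂ => ‖f z‖ * exp (-t * ‖z‖ ^ α)))
    {t : ℝ} (ht : 0 < t) :
    ∃ β : ℕ → ℝ, Summable β ∧
      ∀ (k : ℕ) (z : ℂ), ‖taylorCoeff f k‖ * (‖z‖ + k) ^ k * exp (-t * ‖z‖ ^ α) ≤ β k := by
  obtain ⟨s, hs, hst, hs4⟩ : ∃ s : ℝ, 0 < s ∧ s * 4 ^ α ≤ t ∧ 4 * exp 1 * s ^ α⁻¹ ≤ 1 := by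
    refine ⟨min (t / 4 ^ α) ((4 * exp 1)⁻¹ ^ α), by positivity, ?_, ?_⟩
    · exact (le_div_iff₀ (by positivity)).1 (min_le_left _ _)
    · rw [← le_div_iff₀' (by positivity), one_div,
        rpow_inv_le_iff_of_pos (by positivity) (by positivity) hα]
      exact min_le_right _ _
  obtain ⟨C, hC, hfC⟩ := exists_norm_le_mul_exp (hmin s hs)
  have hcauchy (k : ℕ) (R : ℝ) (hR : 0 ≤ R) : ‖taylorCoeff f k‖ * R ^ k ≤ C * exp (s * R ^ α) :=
    norm_taylorCoeff_mul_pow_le hf hR (fun z hz => hz ▸ hfC z) k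
  refine ⟨fun k => C * (1 / 2) ^ k,
    (summable_geometric_of_lt_one (by norm_num) (by norm_num)).mul_left C, fun k z => ?_⟩
  rcases le_or_gt (k : ℝ) ‖z‖ with hkz | hzk
  · exact mul_add_pow_mul_exp_le_of_le hC (norm_nonneg _) hst (hcauchy k) (norm_nonneg z) hkz
  · have hk : k ≠ 0 := by
      rintro rfl
      exact (norm_nonneg z).not_gt (by simpa using hzk)
    have hexp : exp (-t * ‖z‖ ^ α) ≤ 1 :=
      exp_le_one_iff.2 (mul_nonpos_of_nonpos_of_nonneg (by linarith) (by positivity))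
    calc ‖taylorCoeff f k‖ * (‖z‖ + k) ^ k * exp (-t * ‖z‖ ^ α)
        ≤ ‖taylorCoeff f k‖ * (2 * k) ^ k * 1 := by gcongr; linarith
      _ ≤ C * (1 / 2) ^ k := by
        rw [mul_one]
        exact mul_two_mul_pow_le hα hα1 hs hs4 (norm_nonneg _) (hcauchy k) hk

/-- Falling-factorial (Newton series) case of the main theorem: every entire
function of order at most `α ∈ (0,1]` and minimal type has a unique expansion
in falling factorials, convergent in the topology of `E^α_min(ℂ)`. -/
theorem falling_factorial_expansion_Emin
    (α : ℝ) (hα : 0 < α) (hα1 : α ≤ 1)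
    (f : ℂ → ℂ) (hf : Differentiable ℂ f)
    (hmin : ∀ t : ℝ, 0 < t → BddAbove (Set.range fun z : ℂ =>
      ‖f z‖ * Real.exp (-t * ‖z‖ ^ α))) :
    ∃! c : ℕ → ℂ, ∀ t : ℝ, 0 < t → ∀ ε : ℝ, 0 < ε → ∃ N₀ : ℕ, ∀ N : ℕ, N₀ ≤ N →
      ∀ z : ℂ,
        ‖f z - ∑ n ∈ Finset.range (N + 1),
            c n * ∏ i ∈ Finset.range n, (z - (i : ℂ))‖ *
          Real.exp (-t * ‖z‖ ^ α) ≤ ε := by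
  simp_rw [← descPochhammer_eval_eq_prod_range]
  have hconv (t : ℝ) (ht : 0 < t) (ε : ℝ) (hε : 0 < ε) : ∃ N₀ : ℕ, ∀ N : ℕ, N₀ ≤ N → ∀ z : ℂ,
      ‖f z - ∑ n ∈ range (N + 1), newtonCoeff (taylorCoeff f) n * (descPochhammer ℂ n).eval z‖ *
        exp (-t * ‖z‖ ^ α) ≤ ε := by
    obtain ⟨β, hβ, hbound⟩ := exists_summable_taylorCoeff_bound hα hα1 hf hmin ht
    exact exists_forall_norm_sub_sum_newtonCoeff_mul_le (hasSum_taylorCoeff_mul_pow hf)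
      (fun z => exp_pos (-t * ‖z‖ ^ α)) hβ hbound hε
  refine ⟨newtonCoeff (taylorCoeff f), hconv, fun c hc => ?_⟩
  refine eq_of_forall_sum_mul_descPochhammer_eval_natCast_eq fun m => ?_
  have hweight : 0 < exp (-1 * ‖(m : ℂ)‖ ^ α) := exp_pos _
  rw [← apply_natCast_eq_sum_of_forall_norm_sub_mul_le (w := fun z => exp (-1 * ‖z‖ ^ α)) hweight
      (hc 1 one_pos),
    ← apply_natCast_eq_sum_of_forall_norm_sub_mul_le (w := fun z => exp (-1 * ‖z‖ ^ α)) hweight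
      (hconv 1 one_pos)]
end
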